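/- arXiv:1401.6936 — 8 statements merged into one kernel-verified Lean document; each statement's English description precedes it below -/
import Mathlib

section
/- For all finite graphs G and H, the Grundy number of the lexicographic product satisfies Γ(G[H]) ≥ Γ(G) · Γ(H). -/
open SimpleGraph

/-- A greedy `k`-coloring of `G`: a partition of the vertex set into nonempty stable sets
`S 0, …, S (k-1)` such that for all `j < i`, every vertex of `S i` has a neighbor in `S j`. -/
def IsGreedyColoring {V : Type*} (G : SimpleGraph V) (k : ℕ) (S : Fin k → Set V) : Prop :=
  (∀ v : V, ∃! i, v ∈ S i) ∧
  (∀ i, (S i).Nonempty) ∧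
  (∀ i, ∀ v ∈ S i, ∀ w ∈ S i, ¬ G.Adj v w) ∧
  (∀ i j : Fin k, j < i → ∀ v ∈ S i, ∃ w ∈ S j, G.Adj v w)

/-- The Grundy number `Γ(G)`: the largest `k` such that `G` has a greedy `k`-coloring. -/
noncomputable def grundy {V : Type*} [Fintype V] (G : SimpleGraph V) : ℕ :=
  sSup {k | ∃ S : Fin k → Set V, IsGreedyColoring G k S}

/-- Lexicographic product `G[H]`: `(a,x)` adjacent to `(b,y)` iff `ab ∈ E(G)`,
or `a = b` and `xy ∈ E(H)`. -/
def lexProd {α β : Type*} (G : SimpleGraph α) (H : SimpleGraph β) :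
    SimpleGraph (α × β) where
  Adj x y := G.Adj x.1 y.1 ∨ (x.1 = y.1 ∧ H.Adj x.2 y.2)
  symm := ⟨fun _ _ h => by
    rcases h with h | ⟨h1, h2⟩
    · exact Or.inl h.symm
    · exact Or.inr ⟨h1.symm, h2.symm⟩⟩
  loopless := ⟨fun _ h => by
    rcases h with h | ⟨-, h2⟩
    · exact G.irrefl h
    · exact H.irrefl h2⟩

/-! Greedy colorings of `G` and `H` with `k` and `l` colors give one of `G[H]` with `kl` colors:
color `(a, x)` by the pair (color of `a`, color of `x`), with pairs ordered lexicographically.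
A vertex of color `(i, j)` sees every class `(i', j')` with `i' < i` through its first
coordinate, and every class `(i, j')` with `j' < j` inside its own copy of `H`. -/

theorem finProdFinEquiv_lt_finProdFinEquiv_of_toLex_lt {k l : ℕ} {p q : Fin k × Fin l}
    (hlt : toLex p < toLex q) : finProdFinEquiv p < finProdFinEquiv q := by
  obtain ⟨i, j⟩ := p
  obtain ⟨i', j'⟩ := q
  change (j : ℕ) + l * i < j' + l * i'
  rcases Prod.Lex.toLex_lt_toLex.mp hlt with hi | ⟨hi, hj⟩
  · have hi : (i : ℕ) + 1 ≤ i' := hi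
    calc (j : ℕ) + l * i < l + l * i := by omega
      _ = l * (i + 1) := by ring
      _ ≤ l * i' := Nat.mul_le_mul_left l hi
      _ ≤ j' + l * i' := Nat.le_add_left _ _
  · have hi : (i : ℕ) = i' := congrArg Fin.val hi
    have hj : (j : ℕ) < j' := hj
    rw [hi]
    omega

theorem finProdFinEquiv_lt_finProdFinEquiv_iff {k l : ℕ} {p q : Fin k × Fin l} :
    finProdFinEquiv p < finProdFinEquiv q ↔ toLex p < toLex q :=
  StrictMono.lt_iff_lt (f := fun p : Fin k ×ₗ Fin l => finProdFinEquiv (ofLex p))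
    (fun _ _ => finProdFinEquiv_lt_finProdFinEquiv_of_toLex_lt)

namespace IsGreedyColoring

variable {V : Type*} {G : SimpleGraph V} {k : ℕ} {S : Fin k → Set V}

theorem le_card [Fintype V] (hS : IsGreedyColoring G k S) : k ≤ Fintype.card V := by
  obtain ⟨hunique, hnonempty, -, -⟩ := hS
  choose f hf using hnonempty
  have hinj : Function.Injective f := fun i j hij =>
    (hunique (f i)).unique (hf i) (hij ▸ hf j)
  simpa using Fintype.card_le_of_injective f hinj

theorem bddAbove_setOf [Fintype V] (G : SimpleGraph V) :
    BddAbove {k | ∃ S : Fin k → Set V, IsGreedyColoring G k S} :=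
  ⟨Fintype.card V, fun _ ⟨_, hS⟩ => hS.le_card⟩

theorem le_grundy [Fintype V] (hS : IsGreedyColoring G k S) : k ≤ grundy G :=
  le_csSup (bddAbove_setOf G) ⟨S, hS⟩

theorem lexProd {W : Type*} {H : SimpleGraph W} {l : ℕ} {T : Fin l → Set W}
    (hS : IsGreedyColoring G k S) (hT : IsGreedyColoring H l T) :
    IsGreedyColoring (lexProd G H) (k * l)
      (fun c => S (finProdFinEquiv.symm c).1 ×ˢ T (finProdFinEquiv.symm c).2) := by
  obtain ⟨hS_unique, hS_nonempty, hS_indep, hS_greedy⟩ := hS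
  obtain ⟨hT_unique, hT_nonempty, hT_indep, hT_greedy⟩ := hT
  refine ⟨?_, fun c => (hS_nonempty _).prod (hT_nonempty _), ?_, ?_⟩
  · rintro ⟨a, x⟩
    obtain ⟨i, hi, hi_unique⟩ := hS_unique a
    obtain ⟨j, hj, hj_unique⟩ := hT_unique x
    refine ⟨finProdFinEquiv (i, j), by simpa using ⟨hi, hj⟩, fun c hc => ?_⟩
    rw [← Equiv.symm_apply_eq]
    exact Prod.ext (hi_unique _ hc.1) (hj_unique _ hc.2)
  · rintro c ⟨a, x⟩ ⟨ha, hx⟩ ⟨b, y⟩ ⟨hb, hy⟩ (hab | ⟨-, hxy⟩)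
    · exact hS_indep _ a ha b hb hab
    · exact hT_indep _ x hx y hy hxy
  · intro c c' hlt
    obtain ⟨⟨i, j⟩, rfl⟩ := finProdFinEquiv.surjective c
    obtain ⟨⟨i', j'⟩, rfl⟩ := finProdFinEquiv.surjective c'
    rintro ⟨a, x⟩ ⟨ha, hx⟩
    simp only [Equiv.symm_apply_apply, Set.mem_prod] at ha hx ⊢
    rcases Prod.Lex.toLex_lt_toLex.mp (finProdFinEquiv_lt_finProdFinEquiv_iff.mp hlt)
      with hi | ⟨hi, hj⟩
    · obtain ⟨b, hb, hab⟩ := hS_greedy i i' hi a ha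
      obtain ⟨y, hy⟩ := hT_nonempty j'
      exact ⟨(b, y), ⟨hb, hy⟩, Or.inl hab⟩
    · obtain ⟨y, hy, hxy⟩ := hT_greedy j j' hj x hx
      dsimp only at hi
      exact ⟨(a, y), ⟨hi ▸ ha, hy⟩, Or.inr ⟨rfl, hxy⟩⟩

end IsGreedyColoring

theorem exists_isGreedyColoring_grundy {V : Type*} [Fintype V] {G : SimpleGraph V}
    (hG : grundy G ≠ 0) : ∃ S : Fin (grundy G) → Set V, IsGreedyColoring G (grundy G) S := by
  have hne : {k | ∃ S : Fin k → Set V, IsGreedyColoring G k S}.Nonempty := by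
    by_contra h
    rw [Set.not_nonempty_iff_eq_empty] at h
    exact hG (by rw [grundy, h, csSup_empty, bot_eq_zero])
  exact Nat.sSup_mem hne (IsGreedyColoring.bddAbove_setOf G)

/-- For all finite graphs `G` and `H`, `Γ(G[H]) ≥ Γ(G) · Γ(H)`. -/
theorem grundy_lexProd_ge {α β : Type*} [Fintype α] [Fintype β]
    (G : SimpleGraph α) (H : SimpleGraph β) :
    grundy (lexProd G H) ≥ grundy G * grundy H := by
  rcases eq_or_ne (grundy G) 0 with hG | hG
  · simp [hG]
  rcases eq_or_ne (grundy H) 0 with hH | hH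
  · simp [hH]
  obtain ⟨S, hS⟩ := exists_isGreedyColoring_grundy hG
  obtain ⟨T, hT⟩ := exists_isGreedyColoring_grundy hH
  exact (hS.lexProd hT).le_grundy
end

section
/- For every integer p ≥ 2, the Cartesian product of the complete bipartite graph K_{p,p} with itself satisfies Γ(K_{p,p} □ K_{p,p}) ≥ p + 1 (even though Γ(K_{p,p}) = 2). -/
open SimpleGraph

/- ### Auxiliary material -/

/-- Any greedy coloring has at most `card V` classes. -/
lemma IsGreedyColoring.le_card_s5 {V : Type*} [Fintype V] {G : SimpleGraph V} {k : ℕ}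
    {S : Fin k → Set V} (h : IsGreedyColoring G k S) : k ≤ Fintype.card V := by
  obtain ⟨h1, h2, h3, h4⟩ := h
  choose f hf using h2
  have hinj : Function.Injective f := by
    intro a b hab
    obtain ⟨c, hc, hu⟩ := h1 (f a)
    have ha := hu a (hf a)
    have hb := hu b (by rw [hab]; exact hf b)
    rw [ha, hb]
  simpa using Fintype.card_le_of_injective f hinj

/-- Color used on the `LL` and `RR` blocks. -/
def fA (p i j : ℕ) : ℕ := if i = j ∨ j = p - 1 ∨ j = i + 1 then p else j

/-- Color used on the `LR` and `RL` blocks. -/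
def fB (p i j : ℕ) : ℕ := if i = p - 1 then p - 1 else if i = j then i + 1 else i

lemma keyAB {p a1 a2 b1 b2 : ℕ} (hp : 1 ≤ p) (hb1 : b1 < p)
    (h : a1 = b1 ∨ a2 = b2) : fA p a1 a2 ≠ fB p b1 b2 := by
  unfold fA fB
  split_ifs <;> omega

/-- The greedy coloring function on `K_{p,p} □ K_{p,p}`. -/
def gcol (p : ℕ) : (Fin p ⊕ Fin p) × (Fin p ⊕ Fin p) → ℕ
  | (Sum.inl i, Sum.inl j) => fA p i.val j.val
  | (Sum.inr i, Sum.inr j) => fA p i.val j.val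
  | (Sum.inl i, Sum.inr j) => fB p i.val j.val
  | (Sum.inr i, Sum.inl j) => fB p i.val j.val

lemma gcol_le (p : ℕ) (hp : 1 ≤ p) (v : (Fin p ⊕ Fin p) × (Fin p ⊕ Fin p)) :
    gcol p v ≤ p := by
  obtain ⟨a, b⟩ := v
  rcases a with i | i <;> rcases b with j | j <;>
    · simp only [gcol]
      simp only [fA, fB]
      have hi := i.isLt
      have hj := j.isLt
      split_ifs <;> omega

lemma Kadj_lr {p : ℕ} (x y : Fin p) :
    (completeBipartiteGraph (Fin p) (Fin p)).Adj (.inl x) (.inr y) := by simp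

lemma Kadj_rl {p : ℕ} (x y : Fin p) :
    (completeBipartiteGraph (Fin p) (Fin p)).Adj (.inr x) (.inl y) := by simp

lemma Kadj_iff {p : ℕ} {x y : Fin p ⊕ Fin p} :
    (completeBipartiteGraph (Fin p) (Fin p)).Adj x y ↔ x.isLeft ≠ y.isLeft := by
  cases x <;> cases y <;> simp

/-- The explicit greedy `(p+1)`-coloring of `K_{p,p} □ K_{p,p}`. -/
lemma main_coloring (p : ℕ) (hp : 2 ≤ p) :
    IsGreedyColoring
      ((completeBipartiteGraph (Fin p) (Fin p)).boxProd (completeBipartiteGraph (Fin p) (Fin p)))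
      (p + 1) (fun c => {v | gcol p v = c.val}) := by
  have hp1 : 1 ≤ p := by omega
  refine ⟨?_, ?_, ?_, ?_⟩
  · -- partition
    intro v
    refine ⟨⟨gcol p v, by have := gcol_le p hp1 v; omega⟩, rfl, ?_⟩
    intro y hy
    exact Fin.ext hy.symm
  · -- nonempty
    intro c
    by_cases hc : c.val = p
    · refine ⟨(Sum.inl ⟨0, by omega⟩, Sum.inl ⟨0, by omega⟩), ?_⟩
      simp only [Set.mem_setOf_eq, gcol, fA, hc]
      simp
    · have hcp : c.val < p := by have := c.isLt; omega
      refine ⟨(Sum.inl ⟨c.val, hcp⟩, Sum.inr ⟨p - 1, by omega⟩), ?_⟩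
      simp only [Set.mem_setOf_eq, gcol, fB]
      split_ifs <;> omega
  · -- stability
    rintro c ⟨a, b⟩ hv ⟨a', b'⟩ hw hadj
    simp only [Set.mem_setOf_eq] at hv hw
    rw [boxProd_adj] at hadj
    rcases hadj with ⟨h1, h2⟩ | ⟨h1, h2⟩
    · -- first coords adjacent, second equal
      simp only at h1 h2
      subst h2
      rcases a with i | i <;> rcases a' with i' | i'
      · simp at h1
      · rcases b with j | j <;> simp only [gcol] at hv hw
        · exact keyAB hp1 i'.isLt (Or.inr rfl) (hv.trans hw.symm)
        · exact keyAB hp1 i.isLt (Or.inr rfl) (hw.trans hv.symm)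
      · rcases b with j | j <;> simp only [gcol] at hv hw
        · exact keyAB hp1 i.isLt (Or.inr rfl) (hw.trans hv.symm)
        · exact keyAB hp1 i'.isLt (Or.inr rfl) (hv.trans hw.symm)
      · simp at h1
    · -- second coords adjacent, first equal
      simp only at h1 h2
      subst h2
      rcases b with j | j <;> rcases b' with j' | j'
      · simp at h1
      · rcases a with i | i <;> simp only [gcol] at hv hw
        · exact keyAB hp1 i.isLt (Or.inl rfl) (hv.trans hw.symm)
        · exact keyAB hp1 i.isLt (Or.inl rfl) (hw.trans hv.symm)
      · rcases a with i | i <;> simp only [gcol] at hv hw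
        · exact keyAB hp1 i.isLt (Or.inl rfl) (hw.trans hv.symm)
        · exact keyAB hp1 i.isLt (Or.inl rfl) (hv.trans hw.symm)
      · simp at h1
  · -- support
    rintro c c' hlt ⟨a, b⟩ hv
    simp only [Set.mem_setOf_eq] at hv
    have hb : c'.val < c.val := hlt
    have hcle : c.val ≤ p := hv ▸ gcol_le p hp1 (a, b)
    have hbp : c'.val < p := by omega
    set m := c.val with hm
    set bb := c'.val with hbb
    rcases a with i | i <;> rcases b with j | j
    · -- LL block : v = (inl i, inl j), color fA p i j
      simp only [gcol] at hv
      by_cases hbi : bb = i.val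
      · refine ⟨(Sum.inl i, Sum.inr ⟨p - 1, by omega⟩), ?_, ?_⟩
        · simp only [Set.mem_setOf_eq, gcol, fB]
          split_ifs <;> omega
        · exact Or.inr ⟨Kadj_lr _ _, rfl⟩
      · by_cases hbp1 : bb = p - 1
        · refine ⟨(Sum.inr ⟨p - 1, by omega⟩, Sum.inl j), ?_, ?_⟩
          · simp only [Set.mem_setOf_eq, gcol, fB]
            split_ifs <;> omega
          · exact Or.inl ⟨Kadj_lr _ _, rfl⟩
        · by_cases hbj : bb = j.val
          · -- need j = i + 1
            have hcond : i.val = j.val ∨ j.val = p - 1 ∨ j.val = i.val + 1 := by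
              by_contra hcon
              rw [fA, if_neg hcon] at hv
              omega
            have hij : j.val = i.val + 1 := by
              rcases hcond with h | h | h
              · omega
              · omega
              · exact h
            refine ⟨(Sum.inl i, Sum.inr ⟨i.val, i.isLt⟩), ?_, ?_⟩
            · simp only [Set.mem_setOf_eq, gcol, fB]
              have := j.isLt
              split_ifs <;> omega
            · exact Or.inr ⟨Kadj_lr _ _, rfl⟩
          · refine ⟨(Sum.inr ⟨bb, hbp⟩, Sum.inl j), ?_, ?_⟩
            · simp only [Set.mem_setOf_eq, gcol, fB]
              split_ifs <;> omega
            · exact Or.inl ⟨Kadj_lr _ _, rfl⟩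
    · -- LR block : v = (inl i, inr j), color fB p i j
      simp only [gcol] at hv
      by_cases hbi : bb = i.val
      · -- then i = j and i ≠ p - 1, witness (inr (i+1), inr j)
        have hij : i.val = j.val ∧ i.val ≠ p - 1 := by
          rw [fB] at hv
          split_ifs at hv <;> omega
        refine ⟨(Sum.inr ⟨i.val + 1, by omega⟩, Sum.inr j), ?_, ?_⟩
        · simp only [Set.mem_setOf_eq, gcol, fA]
          split_ifs <;> omega
        · exact Or.inl ⟨Kadj_lr _ _, rfl⟩
      · have hbi' : bb < i.val := by
          rw [fB] at hv
          split_ifs at hv <;> omega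
        refine ⟨(Sum.inl i, Sum.inl ⟨bb, hbp⟩), ?_, ?_⟩
        · simp only [Set.mem_setOf_eq, gcol, fA]
          split_ifs <;> omega
        · exact Or.inr ⟨Kadj_rl _ _, rfl⟩
    · -- RL block : v = (inr i, inl j), color fB p i j
      simp only [gcol] at hv
      by_cases hbi : bb = i.val
      · have hij : i.val = j.val ∧ i.val ≠ p - 1 := by
          rw [fB] at hv
          split_ifs at hv <;> omega
        refine ⟨(Sum.inl ⟨i.val + 1, by omega⟩, Sum.inl j), ?_, ?_⟩
        · simp only [Set.mem_setOf_eq, gcol, fA]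
          split_ifs <;> omega
        · exact Or.inl ⟨Kadj_rl _ _, rfl⟩
      · have hbi' : bb < i.val := by
          rw [fB] at hv
          split_ifs at hv <;> omega
        refine ⟨(Sum.inr i, Sum.inr ⟨bb, hbp⟩), ?_, ?_⟩
        · simp only [Set.mem_setOf_eq, gcol, fA]
          split_ifs <;> omega
        · exact Or.inr ⟨Kadj_lr _ _, rfl⟩
    · -- RR block : v = (inr i, inr j), color fA p i j
      simp only [gcol] at hv
      by_cases hbi : bb = i.val
      · refine ⟨(Sum.inr i, Sum.inl ⟨p - 1, by omega⟩), ?_, ?_⟩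
        · simp only [Set.mem_setOf_eq, gcol, fB]
          split_ifs <;> omega
        · exact Or.inr ⟨Kadj_rl _ _, rfl⟩
      · by_cases hbp1 : bb = p - 1
        · refine ⟨(Sum.inl ⟨p - 1, by omega⟩, Sum.inr j), ?_, ?_⟩
          · simp only [Set.mem_setOf_eq, gcol, fB]
            split_ifs <;> omega
          · exact Or.inl ⟨Kadj_rl _ _, rfl⟩
        · by_cases hbj : bb = j.val
          · have hcond : i.val = j.val ∨ j.val = p - 1 ∨ j.val = i.val + 1 := by
              by_contra hcon
              rw [fA, if_neg hcon] at hv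
              omega
            have hij : j.val = i.val + 1 := by
              rcases hcond with h | h | h
              · omega
              · omega
              · exact h
            refine ⟨(Sum.inr i, Sum.inl ⟨i.val, i.isLt⟩), ?_, ?_⟩
            · simp only [Set.mem_setOf_eq, gcol, fB]
              have := j.isLt
              split_ifs <;> omega
            · exact Or.inr ⟨Kadj_rl _ _, rfl⟩
          · refine ⟨(Sum.inl ⟨bb, hbp⟩, Sum.inr j), ?_, ?_⟩
            · simp only [Set.mem_setOf_eq, gcol, fB]
              split_ifs <;> omega
            · exact Or.inl ⟨Kadj_rl _ _, rfl⟩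

/-- The greedy 2-coloring of `K_{p,p}`. -/
lemma bip_coloring (p : ℕ) (hp : 2 ≤ p) :
    IsGreedyColoring (completeBipartiteGraph (Fin p) (Fin p)) 2
      (fun c => {v | (Sum.elim (fun _ => 0) (fun _ => 1) v : ℕ) = c.val}) := by
  refine ⟨?_, ?_, ?_, ?_⟩
  · intro v
    rcases v with x | x
    · exact ⟨⟨0, by omega⟩, rfl, fun y hy => Fin.ext (by simpa using hy.symm)⟩
    · exact ⟨⟨1, by omega⟩, rfl, fun y hy => Fin.ext (by simpa using hy.symm)⟩
  · intro c
    have := c.isLt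
    have hc2 : c.val = 0 ∨ c.val = 1 := by omega
    rcases hc2 with h | h
    · exact ⟨Sum.inl ⟨0, by omega⟩, by simp [h]⟩
    · exact ⟨Sum.inr ⟨0, by omega⟩, by simp [h]⟩
  · rintro c (x | x) hv (y | y) hw hadj
    · simp at hadj
    · simp only [Set.mem_setOf_eq, Sum.elim_inl, Sum.elim_inr] at hv hw
      omega
    · simp only [Set.mem_setOf_eq, Sum.elim_inl, Sum.elim_inr] at hv hw
      omega
    · simp at hadj
  · intro c c' hlt v hv
    have hc' : c'.val = 0 := by
      have h1 := c.isLt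
      have h2 : c'.val < c.val := hlt
      omega
    have hc : c.val = 1 := by
      have h1 := c.isLt
      have h2 : c'.val < c.val := hlt
      omega
    rcases v with x | x
    · simp only [Set.mem_setOf_eq, Sum.elim_inl, hc] at hv
      omega
    · exact ⟨Sum.inl ⟨0, by omega⟩, by simp [hc'], Kadj_rl _ _⟩

lemma bip_upper (p : ℕ) (hp : 2 ≤ p) {k : ℕ}
    (h : ∃ S : Fin k → Set (Fin p ⊕ Fin p),
      IsGreedyColoring (completeBipartiteGraph (Fin p) (Fin p)) k S) : k ≤ 2 := by
  by_contra hcon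
  push_neg at hcon
  obtain ⟨S, h1, h2, h3, h4⟩ := h
  have h3k : 2 < k := by omega
  set i0 : Fin k := ⟨0, by omega⟩
  set i1 : Fin k := ⟨1, by omega⟩
  set i2 : Fin k := ⟨2, by omega⟩
  obtain ⟨v, hv⟩ := h2 i2
  obtain ⟨w1, hw1, hadj1⟩ := h4 i2 i1 (by simp [i1, i2, Fin.lt_def]) v hv
  obtain ⟨w0, hw0, hadj0⟩ := h4 i2 i0 (by simp [i0, i2, Fin.lt_def]) v hv
  obtain ⟨u, hu, hadju⟩ := h4 i1 i0 (by simp [i0, i1, Fin.lt_def]) w1 hw1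
  refine h3 i0 u hu w0 hw0 ?_
  have h1 := Kadj_iff.mp hadj1
  have h0 := Kadj_iff.mp hadj0
  have hu1 := Kadj_iff.mp hadju
  rw [Kadj_iff]
  revert h1 h0 hu1
  cases hA : Sum.isLeft v <;> cases hB : Sum.isLeft w1 <;>
    cases hC : Sum.isLeft w0 <;> cases hD : Sum.isLeft u <;> simp

/-- For every `p ≥ 2`, `Γ(K_{p,p} □ K_{p,p}) ≥ p + 1`, even though `Γ(K_{p,p}) = 2`. -/
theorem grundy_boxProd_completeBipartite (p : ℕ) (hp : 2 ≤ p) :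
    grundy (completeBipartiteGraph (Fin p) (Fin p)) = 2 ∧
    grundy ((completeBipartiteGraph (Fin p) (Fin p)).boxProd
      (completeBipartiteGraph (Fin p) (Fin p))) ≥ p + 1 := by
  constructor
  · have hmem : 2 ∈ {k | ∃ S : Fin k → Set (Fin p ⊕ Fin p),
        IsGreedyColoring (completeBipartiteGraph (Fin p) (Fin p)) k S} :=
      ⟨_, bip_coloring p hp⟩
    refine le_antisymm ?_ ?_
    · exact csSup_le ⟨2, hmem⟩ (fun k hk => bip_upper p hp hk)
    · exact le_csSup ⟨2, fun k hk => bip_upper p hp hk⟩ hmem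
  · have hmem : p + 1 ∈ {k | ∃ S : Fin k →
        Set ((Fin p ⊕ Fin p) × (Fin p ⊕ Fin p)),
        IsGreedyColoring ((completeBipartiteGraph (Fin p) (Fin p)).boxProd
          (completeBipartiteGraph (Fin p) (Fin p))) k S} :=
      ⟨_, main_coloring p hp⟩
    exact le_csSup ⟨Fintype.card ((Fin p ⊕ Fin p) × (Fin p ⊕ Fin p)),
      fun k hk => hk.elim (fun S hS => hS.le_card_s5)⟩ hmem
end

section
/- Let G be a finite graph and H a finite nonempty graph. Then Γ(G □ H) ≤ Δ(G) · 2^{Γ(H)−1} + Γ(H), where Δ(G) is the maximum degree of G. -/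
open SimpleGraph

/-- Maximum degree `Δ(G)`. -/
noncomputable def maxDeg {V : Type*} [Fintype V] (G : SimpleGraph V) : ℕ :=
  Finset.univ.sup fun v => (G.neighborSet v).ncard

/-!
A greedy colouring is the same as a *Grundy colouring*: a proper colouring in which every vertex
of colour `i` has neighbours of all colours `j < i`; such a colouring on a vertex subset extends to
the whole graph by first fit, so it already bounds `Γ(H)` from below.

Let `c` be a Grundy colouring of `G □ H` and `(a, x₀)` a vertex of top colour. In the fibre
`{a} × H`, a vertex `x` sees through `H`-edges every colour below `c (a, x)` except the at most
`Δ(G)` colours of its `G`-neighbours `(b, x)`. Going down from `x₀`, repeatedly choose the largest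
colour forbidden for no vertex chosen so far and give every chosen vertex a neighbour of that
colour. The chosen set at most doubles in each round, so `Δ(G) · 2^(Γ(H)-1) + Γ(H)` colours
below `c (a, x₀)` would allow `Γ(H)` rounds; ranking the colours met then gives a Grundy colouring
of a subset of `H` with `Γ(H) + 1` colours, which is impossible.
-/

open Finset

theorem Finset.exists_mem_card_filter_lt_eq {α : Type*} [LinearOrder α] (s : Finset α) {j : ℕ}
    (hj : j < #s) : ∃ a ∈ s, #(s.filter (· < a)) = j := by
  classical
  induction s using Finset.induction_on_max generalizing j with
  | empty => simp at hj
  | insert a s ha ih =>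
    rw [card_insert_of_notMem fun h => (ha a h).false] at hj
    rcases (Nat.lt_succ_iff.mp hj).lt_or_eq with hj | rfl
    · obtain ⟨b, hb, rfl⟩ := ih hj
      refine ⟨b, mem_insert_of_mem hb, ?_⟩
      rw [filter_insert, if_neg (ha b hb).not_gt]
    · refine ⟨a, mem_insert_self a s, ?_⟩
      rw [filter_insert, if_neg (lt_irrefl a), filter_true_of_mem ha]

theorem Finset.card_filter_lt_lt_card_filter_lt {α : Type*} [LinearOrder α] {s : Finset α}
    {a b : α} (ha : a ∈ s) (hab : a < b) : #(s.filter (· < a)) < #(s.filter (· < b)) :=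
  card_lt_card <| (ssubset_iff_of_subset (monotone_filter_right s fun _ _ hx => hx.trans hab)).2
    ⟨a, mem_filter.2 ⟨ha, hab⟩, fun h => lt_irrefl a (mem_filter.1 h).2⟩

theorem Finset.card_range_sdiff_le {n t : ℕ} {F F' : Finset ℕ} (ht : ∀ x ∈ range n \ F, x ≤ t) :
    #(range n \ F) ≤ #(range t \ (F ∪ F')) + #F' + 1 := by
  have hsub : range n \ F ⊆ insert t (range t \ (F ∪ F') ∪ F') := by
    intro x hx
    have hxF := (mem_sdiff.1 hx).2
    rcases (ht x hx).lt_or_eq with hxt | rfl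
    · by_cases hxF' : x ∈ F'
      · exact mem_insert_of_mem (mem_union_right _ hxF')
      · exact mem_insert_of_mem (mem_union_left _ (by simp [hxt, hxF, hxF']))
    · exact mem_insert_self x _
  calc #(range n \ F) ≤ #(insert t (range t \ (F ∪ F') ∪ F')) := card_le_card hsub
    _ ≤ #(range t \ (F ∪ F') ∪ F') + 1 := card_insert_le _ _
    _ ≤ #(range t \ (F ∪ F')) + #F' + 1 := by grw [card_union_le]

namespace SimpleGraph

variable {V : Type*} {H : SimpleGraph V}

structure IsGrundyOn (H : SimpleGraph V) (U : Set V) (f : V → ℕ) : Prop where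
  ne_of_adj : ∀ v ∈ U, ∀ w ∈ U, H.Adj v w → f v ≠ f w
  exists_adj : ∀ v ∈ U, ∀ j < f v, ∃ w ∈ U, H.Adj v w ∧ f w = j

namespace IsGrundyOn

variable {U : Set V} {f : V → ℕ}

theorem exists_insert [Finite V] (hf : H.IsGrundyOn U f) (x : V) :
    ∃ g, H.IsGrundyOn (insert x U) g ∧ Set.EqOn g f U := by
  classical
  by_cases hx : x ∈ U
  · exact ⟨f, by rwa [Set.insert_eq_of_mem hx], Set.eqOn_refl f U⟩
  set N := f '' {w | w ∈ U ∧ H.Adj x w}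
  have hN : Nᶜ.Nonempty := (Set.toFinite N).infinite_compl.nonempty
  set g := Function.update f x (sInf Nᶜ)
  have hgx : g x = sInf Nᶜ := Function.update_self ..
  have hgU : Set.EqOn g f U := fun v hv => Function.update_of_ne (ne_of_mem_of_not_mem hv hx) ..
  have hgx_ne : ∀ w ∈ U, H.Adj x w → g x ≠ g w := fun w hw hxw h =>
    Nat.sInf_mem hN ⟨w, ⟨hw, hxw⟩, by rw [← hgU hw, ← h, hgx]⟩
  refine ⟨g, ⟨?_, ?_⟩, hgU⟩
  · rintro v (rfl | hv) w (rfl | hw) hvw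
    · exact absurd hvw H.irrefl
    · exact hgx_ne w hw hvw
    · exact (hgx_ne v hv hvw.symm).symm
    · rw [hgU hv, hgU hw]; exact hf.ne_of_adj v hv w hw hvw
  · rintro v (rfl | hv) j hj
    · rw [hgx] at hj
      obtain ⟨w, ⟨hw, hvw⟩, rfl⟩ := not_not.mp (Nat.notMem_of_lt_sInf hj)
      exact ⟨w, .inr hw, hvw, hgU hw⟩
    · obtain ⟨w, hw, hvw, rfl⟩ := hf.exists_adj v hv j (hgU hv ▸ hj)
      exact ⟨w, .inr hw, hvw, hgU hw⟩

theorem exists_extension [Fintype V] (hf : H.IsGrundyOn U f) :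
    ∃ g, H.IsGrundyOn Set.univ g ∧ Set.EqOn g f U := by
  classical
  suffices ∀ (T : Finset V) (U : Set V) (f : V → ℕ), H.IsGrundyOn U f →
      ∃ g, H.IsGrundyOn (U ∪ T) g ∧ Set.EqOn g f U by
    simpa using this univ U f hf
  intro T
  induction T using Finset.induction_on with
  | empty => exact fun U f hf => ⟨f, by simpa using hf, Set.eqOn_refl f U⟩
  | insert x T _ ih =>
    intro U f hf
    obtain ⟨g₁, hg₁, hg₁f⟩ := hf.exists_insert x
    obtain ⟨g₂, hg₂, hg₂g₁⟩ := ih _ g₁ hg₁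
    refine ⟨g₂, by simpa [Set.insert_union] using hg₂, fun v hv => ?_⟩
    rw [hg₂g₁ (Set.mem_insert_of_mem x hv), hg₁f hv]

end IsGrundyOn

end SimpleGraph

section

variable {V : Type*} {H : SimpleGraph V}

theorem IsGreedyColoring.card_le [Fintype V] {k : ℕ} {S : Fin k → Set V}
    (h : IsGreedyColoring H k S) : k ≤ Fintype.card V := by
  choose r hr using h.2.1
  simpa using Fintype.card_le_of_injective r fun i j hij =>
    (h.1 (r i)).unique (hr i) (hij ▸ hr j)

theorem IsGreedyColoring.exists_isGrundyOn {k : ℕ} {S : Fin k → Set V}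
    (h : IsGreedyColoring H k S) :
    ∃ f, H.IsGrundyOn Set.univ f ∧ ∀ i : Fin k, ∃ v, f v = i := by
  obtain ⟨hpart, hne, hstab, hdom⟩ := h
  choose idx hidx using fun v => (hpart v).exists
  have idx_eq : ∀ v i, v ∈ S i → idx v = i := fun v i hv => (hpart v).unique (hidx v) hv
  refine ⟨fun v => idx v, ⟨?_, ?_⟩, fun i => ?_⟩
  · intro v _ w _ hvw hvw'
    exact hstab _ v (hidx v) w (Fin.ext hvw' ▸ hidx w) hvw
  · intro v _ j hj
    obtain ⟨w, hw, hvw⟩ := hdom (idx v) ⟨j, hj.trans (idx v).isLt⟩ hj v (hidx v)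
    exact ⟨w, trivial, hvw, by rw [idx_eq w _ hw]⟩
  · obtain ⟨v, hv⟩ := hne i
    exact ⟨v, congrArg Fin.val (idx_eq v i hv)⟩

end

namespace SimpleGraph

variable {V : Type*} {H : SimpleGraph V}

namespace IsGrundyOn

variable {U : Set V} {f : V → ℕ}

theorem lt_grundy_of_univ [Fintype V] (hf : H.IsGrundyOn Set.univ f) (v : V) :
    f v < grundy H := by
  obtain ⟨v₀, -, hv₀⟩ := exists_mem_eq_sup univ ⟨v, mem_univ v⟩ f
  have hS : IsGreedyColoring H (f v₀ + 1) fun i => {v | f v = i} := by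
    refine ⟨fun w => ⟨⟨f w, ?_⟩, rfl, fun i hi => Fin.ext hi.symm⟩, fun i => ?_,
      fun i v hv w hw hvw => hf.ne_of_adj v trivial w trivial hvw (hv.trans hw.symm),
      fun i j hji v hv => ?_⟩
    · exact Nat.lt_succ_of_le (hv₀ ▸ le_sup (mem_univ w))
    · rcases (Nat.lt_succ_iff.mp i.isLt).lt_or_eq with hi | hi
      · obtain ⟨w, -, -, hw⟩ := hf.exists_adj v₀ trivial i hi
        exact ⟨w, hw⟩
      · exact ⟨v₀, hi.symm⟩
    · obtain ⟨w, -, hvw, hw⟩ := hf.exists_adj v trivial j (hv.symm ▸ hji)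
      exact ⟨w, hw, hvw⟩
  have hbdd : BddAbove {k | ∃ S : Fin k → Set V, IsGreedyColoring H k S} :=
    ⟨Fintype.card V, fun _ ⟨_, hS⟩ => hS.card_le⟩
  calc f v < f v₀ + 1 := Nat.lt_succ_of_le (hv₀ ▸ le_sup (mem_univ v))
    _ ≤ grundy H := le_csSup hbdd ⟨_, hS⟩

theorem lt_grundy [Fintype V] (hf : H.IsGrundyOn U f) {v : V} (hv : v ∈ U) :
    f v < grundy H := by
  obtain ⟨g, hg, hgf⟩ := hf.exists_extension
  exact hgf hv ▸ hg.lt_grundy_of_univ v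

end IsGrundyOn

def SeesLowerColors (H : SimpleGraph V) (c : V → ℕ) (R U : Finset V) : Prop :=
  ∀ y ∈ R, ∀ z ∈ U, c z < c y → ∃ w ∈ U, H.Adj y w ∧ c w = c z

/-- Replacing each colour by its rank among the colours of `U` yields a Grundy colouring on `U`. -/
theorem card_image_le_grundy [Fintype V] {c : V → ℕ} (hc : ∀ x y, H.Adj x y → c x ≠ c y)
    {U : Finset V} (hU : H.SeesLowerColors c U U) : #(U.image c) ≤ grundy H := by
  set C := U.image c
  set g : V → ℕ := fun v => #(C.filter (· < c v))
  have hg : H.IsGrundyOn U g := by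
    constructor
    · intro v hv w hw hvw
      rcases (hc v w hvw).lt_or_gt with h | h
      · exact (card_filter_lt_lt_card_filter_lt (mem_image_of_mem c hv) h).ne
      · exact (card_filter_lt_lt_card_filter_lt (mem_image_of_mem c hw) h).ne'
    · intro v hv j hj
      obtain ⟨d, hd, rfl⟩ := (C.filter (· < c v)).exists_mem_card_filter_lt_eq hj
      obtain ⟨hdC, hdv⟩ := mem_filter.1 hd
      obtain ⟨z, hz, rfl⟩ := mem_image.1 hdC
      obtain ⟨w, hw, hvw, hwz⟩ := hU v hv z hz hdv
      refine ⟨w, hw, hvw, ?_⟩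
      simp only [g, hwz, filter_filter]
      exact congrArg card (filter_congr fun a _ => ⟨fun h => ⟨h.trans hdv, h⟩, And.right⟩)
  rcases C.eq_empty_or_nonempty with hC | hC
  · simp [hC]
  obtain ⟨d, hd, hdC⟩ := C.exists_mem_card_filter_lt_eq (Nat.sub_one_lt (card_ne_zero.2 hC))
  obtain ⟨v, hv, rfl⟩ := mem_image.1 hd
  have hgv : g v = #C - 1 := hdC
  have := hg.lt_grundy (mem_coe.2 hv)
  omega

/-- Free colours that suffice to pick `s` colour classes below `a` vertices that each forbid at
most `D` colours: one colour per class, plus `D` for each of the at most `a * (2 ^ (s - 1) - 1)`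
vertices added before the last round. -/
def budget (D a s : ℕ) : ℕ :=
  s + D * a * (2 ^ (s - 1) - 1)

theorem budget_add_le {D a a' s : ℕ} (hs : 0 < s) (ha : a' ≤ 2 * a) :
    budget D a' s + D * a + 1 ≤ budget D a (s + 1) := by
  obtain ⟨r, rfl⟩ := Nat.exists_eq_add_one_of_ne_zero hs.ne'
  have hpow : 2 ^ (r + 1) - 1 = 2 * (2 ^ r - 1) + 1 := by
    have := Nat.one_le_two_pow (n := r)
    rw [pow_succ]
    omega
  have ha' : D * a' * (2 ^ r - 1) ≤ 2 * (D * a * (2 ^ r - 1)) :=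
    calc D * a' * (2 ^ r - 1) ≤ D * (2 * a) * (2 ^ r - 1) := by gcongr
      _ = 2 * (D * a * (2 ^ r - 1)) := by ring
  have hsplit : D * a * (2 ^ (r + 1) - 1) = 2 * (D * a * (2 ^ r - 1)) + D * a := by
    rw [hpow]; ring
  simp only [budget, Nat.add_sub_cancel, hsplit]
  omega

theorem budget_one_add (D s : ℕ) : budget D 1 s + D = s + D * 2 ^ (s - 1) := by
  have := Nat.le_mul_of_pos_right D (Nat.one_le_two_pow (n := s - 1))
  rw [budget, mul_one, Nat.mul_sub_one]
  omega

variable {c : V → ℕ}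

theorem SeesLowerColors.union_left [DecidableEq V] {R W U : Finset V} {t : ℕ}
    (hW : ∀ z ∈ W, c z = t) (hU : ∀ y ∈ U, c y < t) (hRW : ∀ y ∈ R, ∃ z ∈ W, H.Adj y z)
    (h : H.SeesLowerColors c (R ∪ W ∪ U) U) : H.SeesLowerColors c (R ∪ (W ∪ U)) (W ∪ U) := by
  intro y hy z hz hzy
  rcases mem_union.1 hz with hz | hz
  · rw [hW z hz] at hzy ⊢
    rcases mem_union.1 hy with hy | hy
    · obtain ⟨w, hw, hyw⟩ := hRW y hy
      exact ⟨w, mem_union_left _ hw, hyw, hW w hw⟩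
    rcases mem_union.1 hy with hy | hy
    · exact absurd (hW y hy) hzy.ne'
    · exact absurd (hU y hy) hzy.not_gt
  · rw [← union_assoc] at hy
    obtain ⟨w, hw, hyw, hwz⟩ := h y hy z hz hzy
    exact ⟨w, mem_union_right _ hw, hyw, hwz⟩

theorem card_image_union_eq_succ [DecidableEq V] {W U : Finset V} {t : ℕ} (hWne : W.Nonempty)
    (hW : ∀ z ∈ W, c z = t) (hU : ∀ y ∈ U, c y < t) : #((W ∪ U).image c) = #(U.image c) + 1 := by
  have hWc : W.image c = {t} := (image_congr fun z hz => hW z hz).trans (image_const hWne t)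
  have htU : t ∉ U.image c := fun h => by
    obtain ⟨y, hy, hyt⟩ := mem_image.1 h
    exact (hU y hy).ne hyt
  rw [image_union, hWc, singleton_union, card_insert_of_notMem htU]

variable {m : V → Finset ℕ} {D : ℕ}

theorem exists_seesLowerColors [DecidableEq V] (hm : ∀ x, #(m x) ≤ D)
    (hdom : ∀ x, ∀ j < c x, j ∉ m x → ∃ y, H.Adj x y ∧ c y = j) (s : ℕ) {R : Finset V}
    (hR : R.Nonempty) {n : ℕ} (hn : ∀ y ∈ R, n ≤ c y)
    (hcard : budget D #R s ≤ #(range n \ R.biUnion m)) :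
    ∃ U : Finset V, #(U.image c) = s ∧ (∀ y ∈ U, c y < n) ∧ H.SeesLowerColors c (R ∪ U) U := by
  induction s generalizing R n with
  | zero => exact ⟨∅, by simp, by simp, by simp [SeesLowerColors]⟩
  | succ s ih =>
    set A := range n \ R.biUnion m
    have hA : A.Nonempty := card_pos.1 (by rw [budget] at hcard; omega)
    set t := A.max' hA
    obtain ⟨htn, htm⟩ := mem_sdiff.1 (A.max'_mem hA)
    replace htn : t < n := mem_range.1 htn
    have hnbr : ∀ y ∈ R, ∃ z, H.Adj y z ∧ c z = t := fun y hy =>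
      hdom y t (htn.trans_le (hn y hy)) fun h => htm (mem_biUnion.2 ⟨y, hy, h⟩)
    choose! f hfadj hfc using hnbr
    set W := R.image f
    have hcW : ∀ z ∈ W, c z = t := forall_mem_image.2 hfc
    have hW : #W ≤ #R := card_image_le
    have hcount : #A ≤ #(range t \ (R ∪ W).biUnion m) + D * #R + 1 := by
      have hWm : #(W.biUnion m) ≤ #W * D := card_biUnion_le_card_mul W m D fun x _ => hm x
      have : #A ≤ #(range t \ (R.biUnion m ∪ W.biUnion m)) + #(W.biUnion m) + 1 :=
        card_range_sdiff_le fun x hx => A.le_max' x hx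
      have hWR : #W * D ≤ D * #R := by rw [mul_comm]; exact Nat.mul_le_mul_left D hW
      rw [union_biUnion]
      omega
    have hcard' : budget D #(R ∪ W) s ≤ #(range t \ (R ∪ W).biUnion m) := by
      rcases Nat.eq_zero_or_pos s with rfl | hs
      · simp [budget]
      have hRW : #(R ∪ W) ≤ 2 * #R := (card_union_le R W).trans (by omega)
      have := budget_add_le (D := D) hs hRW
      omega
    have hn' : ∀ y ∈ R ∪ W, t ≤ c y := by
      intro y hy
      rcases mem_union.1 hy with hy | hy
      · exact (htn.trans_le (hn y hy)).le
      · exact (hcW y hy).ge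
    obtain ⟨U, hUc, hUt, hU⟩ := ih (hR.mono subset_union_left) hn' hcard'
    refine ⟨W ∪ U, ?_, ?_,
      hU.union_left hcW hUt fun y hy => ⟨f y, mem_image_of_mem f hy, hfadj y hy⟩⟩
    · rw [card_image_union_eq_succ (hR.image f) hcW hUt, hUc]
    · intro y hy
      rcases mem_union.1 hy with hy | hy
      · exact hcW y hy ▸ htn
      · exact (hUt y hy).trans htn

theorem lt_mul_two_pow_add_grundy [Fintype V] (hc : ∀ x y, H.Adj x y → c x ≠ c y)
    (hm : ∀ x, #(m x) ≤ D) (hdom : ∀ x, ∀ j < c x, j ∉ m x → ∃ y, H.Adj x y ∧ c y = j) (x : V) :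
    c x < D * 2 ^ (grundy H - 1) + grundy H := by
  classical
  by_contra! hx
  have hcard : budget D #{x} (grundy H) ≤ #(range (c x) \ ({x} : Finset V).biUnion m) := by
    have := budget_one_add D (grundy H)
    have := le_card_sdiff (m x) (range (c x))
    have := hm x
    rw [card_range] at *
    rw [card_singleton, singleton_biUnion]
    omega
  obtain ⟨U, hUc, hUx, hU⟩ := exists_seesLowerColors hm hdom (grundy H) (singleton_nonempty x)
    (fun y hy => by rw [mem_singleton.1 hy]) hcard
  have hxU : c x ∉ U.image c := fun h => by
    obtain ⟨y, hy, hyx⟩ := mem_image.1 h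
    exact (hUx y hy).ne hyx
  have hins : H.SeesLowerColors c (insert x U) (insert x U) := by
    intro y hy z hz hzy
    rcases mem_insert.1 hz with rfl | hz
    · rcases mem_insert.1 hy with rfl | hy
      · exact absurd hzy (lt_irrefl _)
      · exact absurd (hUx y hy) hzy.not_gt
    · obtain ⟨w, hw, hyw, hwz⟩ := hU y (by rwa [← insert_eq]) z hz hzy
      exact ⟨w, mem_insert_of_mem hw, hyw, hwz⟩
  have := card_image_le_grundy hc hins
  rw [image_insert, card_insert_of_notMem hxU, hUc] at this
  omega

theorem degree_le_maxDeg [Fintype V] [DecidableRel H.Adj] (v : V) : H.degree v ≤ maxDeg H := by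
  rw [← card_neighborFinset_eq_degree, neighborFinset, ← Set.ncard_eq_toFinset_card']
  exact le_sup (f := fun v => (H.neighborSet v).ncard) (mem_univ v)

theorem IsGrundyOn.lt_of_boxProd {α : Type*} [Fintype α] [Fintype V] {G : SimpleGraph α}
    {f : α × V → ℕ} (hf : (G □ H).IsGrundyOn Set.univ f) (a : α) (x : V) :
    f (a, x) < maxDeg G * 2 ^ (grundy H - 1) + grundy H := by
  classical
  refine lt_mul_two_pow_add_grundy (c := fun y => f (a, y))
    (m := fun y => (G.neighborFinset a).image fun b => f (b, y)) ?_ ?_ ?_ x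
  · exact fun y z hyz => hf.ne_of_adj _ trivial _ trivial (boxProd_adj_right.2 hyz)
  · exact fun y => card_image_le.trans ((card_neighborFinset_eq_degree G a).trans_le
      (degree_le_maxDeg a))
  · intro y j hj hjm
    obtain ⟨⟨b, z⟩, -, hadj, rfl⟩ := hf.exists_adj _ trivial j hj
    rcases boxProd_adj.1 hadj with ⟨hab, rfl⟩ | ⟨hyz, rfl⟩
    · exact absurd (mem_image_of_mem _ ((mem_neighborFinset G a b).2 hab)) hjm
    · exact ⟨z, hyz, rfl⟩

end SimpleGraph

theorem grundy_boxProd_le_general {α β : Type*} [Fintype α] [Fintype β]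
    (G : SimpleGraph α) (H : SimpleGraph β) :
    grundy (G.boxProd H) ≤ maxDeg G * 2 ^ (grundy H - 1) + grundy H := by
  refine csSup_le' fun k ⟨S, hS⟩ => ?_
  obtain ⟨f, hf, hsurj⟩ := hS.exists_isGrundyOn
  rcases Nat.eq_zero_or_pos k with rfl | hk
  · exact Nat.zero_le _
  obtain ⟨⟨a, x⟩, hax⟩ := hsurj ⟨k - 1, by omega⟩
  have := hf.lt_of_boxProd a x
  rw [hax] at this
  exact Nat.le_of_pred_lt this

/-- For a finite graph `G` and a finite nonempty graph `H`,
`Γ(G □ H) ≤ Δ(G) · 2^(Γ(H)−1) + Γ(H)`. -/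
theorem grundy_boxProd_le {α β : Type*} [Fintype α] [Fintype β] [Nonempty β]
    (G : SimpleGraph α) (H : SimpleGraph β) :
    grundy (G.boxProd H) ≤ maxDeg G * 2 ^ (grundy H - 1) + grundy H :=
  grundy_boxProd_le_general G H
end

section
/- Let G be a finite nonempty graph with no isolated vertices and let H be a connected complete bipartite graph with at least one edge. Then Γ(G □ H) ≤ max over v ∈ V(G) of min{2·d(v) + 2, 2·d₁(v) + 3}, where d(v) is the degree of v in G and d₁(v) = max{d(u) : u ∈ N_G(v)} is the maximum degree of a neighbor of v in G. -/
/-!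
Fix a greedy coloring of `G □ H`, where `H` is complete bipartite with sides `s` and `sᶜ`.
A vertex `(v, x)` of color `i` sees every smaller color either on the fiber `{v} × N_H(x)`,
i.e. on the side of the fiber opposite to `x`, or on a vertex `(u, x)` with `u ∈ N_G(v)`;
the latter vertices are distinct for distinct colors.  The two sides of a fiber carry
disjoint color sets, so all colors on one side except the largest are realized by
neighbors in a row: each side carries at most `d(v) + 1` colors, whence `i ≤ 2 d(v) + 1`.
If moreover a neighbor `a` of `u` has a color at least `j` in the row where `u` has color
`j`, then `a` is of no help and `j ≤ 2 d(u)`.  At a vertex `(a, x)` of color `i`, unless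
`i ≤ 2 d₁(a) + 2`, this forces the colors `i - 1` and `i - 2` onto the side opposite to
`x`, and then `i - 2` also onto the side of `x`, contradicting disjointness.
-/

open SimpleGraph

namespace IsGreedyColoring

variable {V : Type*} {G : SimpleGraph V} {k : ℕ} {S : Fin k → Set V}

theorem eq_of_mem (hS : IsGreedyColoring G k S) {v : V} {i j : Fin k} (hi : v ∈ S i)
    (hj : v ∈ S j) : i = j :=
  (hS.1 v).unique hi hj

theorem not_adj (hS : IsGreedyColoring G k S) {i : Fin k} {v w : V} (hv : v ∈ S i)
    (hw : w ∈ S i) : ¬ G.Adj v w :=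
  hS.2.2.1 i v hv w hw

theorem exists_adj_of_lt (hS : IsGreedyColoring G k S) {i j : Fin k} (hji : j < i) {v : V}
    (hv : v ∈ S i) : ∃ w ∈ S j, G.Adj v w :=
  hS.2.2.2 i j hji v hv

end IsGreedyColoring

theorem Fin.ncard_Iio {k : ℕ} (i : Fin k) : (Set.Iio i).ncard = i := by
  rw [Set.ncard_eq_toFinset_card', Set.toFinset_Iio, Fin.card_Iio]

def IsCompleteBipartiteWith {β : Type*} (H : SimpleGraph β) (s : Set β) : Prop :=
  ∀ x y, H.Adj x y ↔ ((x ∈ s ∧ y ∉ s) ∨ (x ∉ s ∧ y ∈ s))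

namespace IsCompleteBipartiteWith

variable {β : Type*} {H : SimpleGraph β} {s : Set β}

theorem compl (hH : IsCompleteBipartiteWith H s) : IsCompleteBipartiteWith H sᶜ := by
  intro x y
  rw [hH x y, Set.mem_compl_iff, Set.mem_compl_iff, not_not, not_not]
  tauto

theorem adj {x y : β} (hH : IsCompleteBipartiteWith H s) (hx : x ∈ s) (hy : y ∉ s) :
    H.Adj x y :=
  (hH x y).2 (Or.inl ⟨hx, hy⟩)

theorem notMem_of_adj {x y : β} (hH : IsCompleteBipartiteWith H s) (hx : x ∈ s)
    (hxy : H.Adj x y) : y ∉ s := by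
  rcases (hH x y).1 hxy with ⟨-, hy⟩ | ⟨hx', -⟩
  exacts [hy, absurd hx hx']

end IsCompleteBipartiteWith

section BoxProdCompleteBipartite

variable {α β : Type*} {G : SimpleGraph α} {H : SimpleGraph β} {s : Set β} {k : ℕ}
  {S : Fin k → Set (α × β)}

def fiberColors (S : Fin k → Set (α × β)) (s : Set β) (v : α) : Set (Fin k) :=
  {i | ∃ x ∈ s, (v, x) ∈ S i}

theorem disjoint_fiberColors_compl (hS : IsGreedyColoring (G.boxProd H) k S)
    (hH : IsCompleteBipartiteWith H s) (v : α) :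
    Disjoint (fiberColors S s v) (fiberColors S sᶜ v) := by
  rw [Set.disjoint_left]
  rintro j ⟨x, hx, hvx⟩ ⟨y, hy, hvy⟩
  exact hS.not_adj hvx hvy (boxProd_adj.2 (Or.inr ⟨hH.adj hx hy, rfl⟩))

theorem exists_adj_mem_of_notMem_fiberColors_compl (hS : IsGreedyColoring (G.boxProd H) k S)
    (hH : IsCompleteBipartiteWith H s) {i j : Fin k} {v : α} {x : β} (hx : x ∈ s)
    (hvx : (v, x) ∈ S i) (hji : j < i) (hj : j ∉ fiberColors S sᶜ v) :
    ∃ u, G.Adj v u ∧ (u, x) ∈ S j := by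
  obtain ⟨⟨u, y⟩, huy, hadj⟩ := hS.exists_adj_of_lt hji hvx
  rcases boxProd_adj.1 hadj with ⟨hvu, rfl⟩ | ⟨hxy, rfl⟩
  · exact ⟨u, hvu, huy⟩
  · exact absurd ⟨y, hH.notMem_of_adj hx hxy, huy⟩ hj

theorem ncard_Iio_diff_fiberColors_compl_le [Finite α]
    (hS : IsGreedyColoring (G.boxProd H) k S) (hH : IsCompleteBipartiteWith H s)
    {i : Fin k} {v : α} {x : β} (hx : x ∈ s) (hvx : (v, x) ∈ S i) (E : Set α)
    (hE : ∀ u ∈ E, ∀ j < i, (u, x) ∉ S j) :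
    (Set.Iio i \ fiberColors S sᶜ v).ncard ≤ (G.neighborSet v \ E).ncard := by
  have hwit : ∀ j ∈ Set.Iio i \ fiberColors S sᶜ v, ∃ u, G.Adj v u ∧ (u, x) ∈ S j :=
    fun j hj => exists_adj_mem_of_notMem_fiberColors_compl hS hH hx hvx hj.1 hj.2
  have : Nonempty α := ⟨v⟩
  choose! f hf_adj hf_mem using hwit
  refine Set.ncard_le_ncard_of_injOn f (fun j hj => ⟨hf_adj j hj, fun hE' => ?_⟩) ?_
  · exact hE _ hE' j hj.1 (hf_mem j hj)
  · intro j₁ hj₁ j₂ hj₂ hf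
    exact hS.eq_of_mem (hf ▸ hf_mem j₁ hj₁) (hf_mem j₂ hj₂)

theorem ncard_fiberColors_le [Finite α] (hS : IsGreedyColoring (G.boxProd H) k S)
    (hH : IsCompleteBipartiteWith H s) (v : α) :
    (fiberColors S s v).ncard ≤ (G.neighborSet v).ncard + 1 := by
  rcases (fiberColors S s v).eq_empty_or_nonempty with h | h
  · simp [h]
  obtain ⟨m, ⟨y, hy, hvy⟩, hmax⟩ := Set.exists_max_image _ id (Set.toFinite _) h
  have hsub : fiberColors S s v ⊆ insert m (Set.Iio m \ fiberColors S sᶜ v) := by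
    intro j hj
    rcases eq_or_ne j m with rfl | hne
    · exact Set.mem_insert _ _
    · exact Set.mem_insert_of_mem _ ⟨lt_of_le_of_ne (hmax j hj) hne,
        Set.disjoint_left.1 (disjoint_fiberColors_compl hS hH v) hj⟩
  calc (fiberColors S s v).ncard
      ≤ (insert m (Set.Iio m \ fiberColors S sᶜ v)).ncard := Set.ncard_le_ncard hsub
    _ ≤ (Set.Iio m \ fiberColors S sᶜ v).ncard + 1 := Set.ncard_insert_le _ _
    _ ≤ (G.neighborSet v \ ∅).ncard + 1 := by
        gcongr
        exact ncard_Iio_diff_fiberColors_compl_le hS hH hy hvy ∅ (by simp)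
    _ = (G.neighborSet v).ncard + 1 := by rw [Set.sdiff_empty]

theorem val_le_ncard_neighborSet_add [Finite α] (hS : IsGreedyColoring (G.boxProd H) k S)
    (hH : IsCompleteBipartiteWith H s) {i : Fin k} {v : α} {x : β} (hvx : (v, x) ∈ S i)
    (E : Set α) (hE : ∀ u ∈ E, ∀ j < i, (u, x) ∉ S j) :
    (i : ℕ) ≤ (G.neighborSet v).ncard + 1 + (G.neighborSet v \ E).ncard := by
  wlog hx : x ∈ s generalizing s
  · exact this hH.compl hx
  calc (i : ℕ) = (Set.Iio i).ncard := (Fin.ncard_Iio i).symm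
    _ ≤ (Set.Iio i \ fiberColors S sᶜ v).ncard + (fiberColors S sᶜ v).ncard :=
        Set.ncard_le_ncard_sdiff_add_ncard _ _
    _ ≤ (G.neighborSet v \ E).ncard + ((G.neighborSet v).ncard + 1) :=
        add_le_add (ncard_Iio_diff_fiberColors_compl_le hS hH hx hvx E hE)
          (ncard_fiberColors_le hS hH.compl v)
    _ = (G.neighborSet v).ncard + 1 + (G.neighborSet v \ E).ncard := add_comm _ _

theorem val_le_two_mul_ncard_neighborSet_add_one [Finite α]
    (hS : IsGreedyColoring (G.boxProd H) k S) (hH : IsCompleteBipartiteWith H s)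
    {i : Fin k} {v : α} {x : β} (hvx : (v, x) ∈ S i) :
    (i : ℕ) ≤ 2 * (G.neighborSet v).ncard + 1 := by
  have h := val_le_ncard_neighborSet_add hS hH hvx ∅ (by simp)
  rw [Set.sdiff_empty] at h
  omega

theorem val_le_two_mul_ncard_neighborSet_of_adj [Finite α]
    (hS : IsGreedyColoring (G.boxProd H) k S) (hH : IsCompleteBipartiteWith H s)
    {i j : Fin k} {a u : α} {y : β} (hau : G.Adj a u) (huy : (u, y) ∈ S j)
    (hay : (a, y) ∈ S i) (hji : j ≤ i) :
    (j : ℕ) ≤ 2 * (G.neighborSet u).ncard := by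
  have hE : ∀ w ∈ ({a} : Set α), ∀ j' < j, (w, y) ∉ S j' := by
    rintro w rfl j' hj' hwy
    exact (lt_of_lt_of_le hj' hji).ne (hS.eq_of_mem hwy hay)
  have h := val_le_ncard_neighborSet_add hS hH huy {a} hE
  have ha : a ∈ G.neighborSet u := hau.symm
  rw [Set.ncard_sdiff_singleton_of_mem ha] at h
  have : 0 < (G.neighborSet u).ncard := (Set.ncard_pos (Set.toFinite _)).2 ⟨a, ha⟩
  omega

theorem mem_fiberColors_compl_of_lt [Finite α] (hS : IsGreedyColoring (G.boxProd H) k S)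
    (hH : IsCompleteBipartiteWith H s) {i j : Fin k} {a : α} {y : β} (hy : y ∈ s)
    (hay : (a, y) ∈ S i) (hji : j < i)
    (hdeg : ∀ u, G.Adj a u → 2 * (G.neighborSet u).ncard < j) :
    j ∈ fiberColors S sᶜ a := by
  by_contra hj
  obtain ⟨u, hau, huy⟩ := exists_adj_mem_of_notMem_fiberColors_compl hS hH hy hay hji hj
  exact (hdeg u hau).not_ge
    (val_le_two_mul_ncard_neighborSet_of_adj hS hH hau huy hay hji.le)

theorem exists_adj_val_le_two_mul_ncard_neighborSet_add_two [Finite α]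
    (hS : IsGreedyColoring (G.boxProd H) k S) (hH : IsCompleteBipartiteWith H s)
    {i : Fin k} {a : α} {x : β} (hax : (a, x) ∈ S i) (hi : 2 ≤ (i : ℕ)) :
    ∃ u, G.Adj a u ∧ (i : ℕ) ≤ 2 * (G.neighborSet u).ncard + 2 := by
  wlog hx : x ∈ s generalizing s
  · exact this hH.compl hx
  by_contra! hdeg
  let i₁ : Fin k := ⟨i - 1, by omega⟩
  let i₂ : Fin k := ⟨i - 2, by omega⟩
  have hi₁ : i₁ < i := Fin.lt_def.2 (by simp only [i₁]; omega)
  have hi₂ : i₂ < i₁ := Fin.lt_def.2 (by simp only [i₁, i₂]; omega)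
  have hdeg₁ : ∀ u, G.Adj a u → 2 * (G.neighborSet u).ncard < i₁ := fun u hu => by
    have := hdeg u hu; simp only [i₁]; omega
  have hdeg₂ : ∀ u, G.Adj a u → 2 * (G.neighborSet u).ncard < i₂ := fun u hu => by
    have := hdeg u hu; simp only [i₂]; omega
  obtain ⟨y, hy, hay⟩ := mem_fiberColors_compl_of_lt hS hH hx hax hi₁ hdeg₁
  have h₂ : i₂ ∈ fiberColors S sᶜ a :=
    mem_fiberColors_compl_of_lt hS hH hx hax (hi₂.trans hi₁) hdeg₂
  have h₂' : i₂ ∈ fiberColors S s a := by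
    simpa only [compl_compl] using mem_fiberColors_compl_of_lt hS hH.compl hy hay hi₂ hdeg₂
  exact Set.disjoint_left.1 (disjoint_fiberColors_compl hS hH a) h₂' h₂

theorem val_le_two_mul_sSup_ncard_neighborSet_add_two [Finite α]
    (hS : IsGreedyColoring (G.boxProd H) k S) (hH : IsCompleteBipartiteWith H s)
    {i : Fin k} {a : α} {x : β} (hax : (a, x) ∈ S i) :
    (i : ℕ) ≤ 2 * sSup ((fun u => (G.neighborSet u).ncard) '' G.neighborSet a) + 2 := by
  rcases lt_or_ge (i : ℕ) 2 with hi | hi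
  · omega
  obtain ⟨u, hau, hu⟩ := exists_adj_val_le_two_mul_ncard_neighborSet_add_two hS hH hax hi
  have : (G.neighborSet u).ncard ≤
      sSup ((fun u => (G.neighborSet u).ncard) '' G.neighborSet a) :=
    le_csSup (Set.toFinite _).bddAbove ⟨u, hau, rfl⟩
  omega

end BoxProdCompleteBipartite

theorem grundy_boxProd_completeBipartite_le_general {α β : Type*} [Fintype α] [Fintype β]
    (G : SimpleGraph α)
    (H : SimpleGraph β) (s : Set β)
    (hH : ∀ x y, H.Adj x y ↔ ((x ∈ s ∧ y ∉ s) ∨ (x ∉ s ∧ y ∈ s))) :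
    grundy (G.boxProd H) ≤
      sSup {m : ℕ | ∃ v : α,
        m = min (2 * (G.neighborSet v).ncard + 2)
          (2 * sSup ((fun u => (G.neighborSet u).ncard) '' G.neighborSet v) + 3)} := by
  have hbdd : BddAbove {m : ℕ | ∃ v : α, m = min (2 * (G.neighborSet v).ncard + 2)
      (2 * sSup ((fun u => (G.neighborSet u).ncard) '' G.neighborSet v) + 3)} :=
    (Set.finite_range _).bddAbove.mono (by rintro m ⟨v, rfl⟩; exact ⟨v, rfl⟩)
  refine csSup_le' ?_
  rintro (_ | k) ⟨S, hS⟩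
  · exact Nat.zero_le _
  obtain ⟨⟨a, x⟩, hax⟩ := hS.2.1 (Fin.last k)
  have h₁ := val_le_two_mul_ncard_neighborSet_add_one hS hH hax
  have h₂ := val_le_two_mul_sSup_ncard_neighborSet_add_two hS hH hax
  rw [Fin.val_last] at h₁ h₂
  exact (le_min (by omega) (by omega)).trans (le_csSup hbdd ⟨a, rfl⟩)

/-- Let `G` be a finite nonempty graph with no isolated vertices and `H` a connected
complete bipartite graph with at least one edge (given by a bipartition `(s, sᶜ)` with
both parts nonempty).  Then `Γ(G □ H) ≤ max_{v ∈ V(G)} min (2·d(v) + 2) (2·d₁(v) + 3)`,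
where `d(v)` is the degree of `v` and `d₁(v)` the maximum degree of a neighbor of `v`. -/
theorem grundy_boxProd_completeBipartite_le {α β : Type*} [Fintype α] [Fintype β]
    [Nonempty α] (G : SimpleGraph α) (hG : ∀ v, ∃ u, G.Adj v u)
    (H : SimpleGraph β) (s : Set β) (hs : s.Nonempty) (hsc : sᶜ.Nonempty)
    (hH : ∀ x y, H.Adj x y ↔ ((x ∈ s ∧ y ∉ s) ∨ (x ∉ s ∧ y ∈ s))) :
    grundy (G.boxProd H) ≤
      sSup {m : ℕ | ∃ v : α,
        m = min (2 * (G.neighborSet v).ncard + 2)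
          (2 * sSup ((fun u => (G.neighborSet u).ncard) '' G.neighborSet v) + 3)} :=
  grundy_boxProd_completeBipartite_le_general G H s hH
end

section
/- Let G and H be finite nonempty graphs. If the chromatic number of H is at most the maximum degree of G, i.e., χ(H) ≤ Δ(G), then Γ(G □ H) ≥ Γ(H) + 1. -/
open SimpleGraph

/-- A partial greedy coloring on a set `W`. -/
def PartialGC {V : Type*} (G : SimpleGraph V) (W : Set V) (k : ℕ) (S : Fin k → Set V) : Prop :=
  (∀ v ∈ W, ∃! i, v ∈ S i) ∧
  (∀ i, S i ⊆ W) ∧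
  (∀ i, (S i).Nonempty) ∧
  (∀ i, ∀ v ∈ S i, ∀ w ∈ S i, ¬ G.Adj v w) ∧
  (∀ i j : Fin k, j < i → ∀ v ∈ S i, ∃ w ∈ S j, G.Adj v w)

lemma extendPGC {V : Type*} [Fintype V] (G : SimpleGraph V) :
    ∀ (d : ℕ) (W : Set V) (k : ℕ) (S : Fin k → Set V), Wᶜ.ncard = d → PartialGC G W k S →
      ∃ (k' : ℕ) (S' : Fin k' → Set V), k ≤ k' ∧ IsGreedyColoring G k' S' := by
  intro d
  induction d using Nat.strong_induction_on with
  | _ d IH =>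
    intro W k S hd hP
    classical
    obtain ⟨hpart, hsub, hne, hstab, hgr⟩ := hP
    rcases eq_or_ne (Wᶜ) ∅ with hW | hW
    · have hWu : W = Set.univ := by
        rw [← Set.compl_empty_iff, hW]
      refine ⟨k, S, le_rfl, ?_, hne, hstab, hgr⟩
      intro v; exact hpart v (hWu ▸ Set.mem_univ v)
    · obtain ⟨v, hv⟩ := Set.nonempty_iff_ne_empty.mpr hW
      have hvW : v ∉ W := hv
      -- the first-fit color of v
      set P : ℕ → Prop := fun n => ∀ (h : n < k), ∀ w ∈ S ⟨n, h⟩, ¬ G.Adj v w with hPdef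
      have hPk : P k := fun h => absurd h (lt_irrefl k)
      have hex : ∃ n, P n := ⟨k, hPk⟩
      set m := Nat.find hex with hm
      have hmspec : P m := Nat.find_spec hex
      have hmmin : ∀ j < m, ¬ P j := fun j hj => Nat.find_min hex hj
      have hmk : m ≤ k := Nat.find_le hPk
      have hnbr : ∀ (j : ℕ) (hj : j < m), ∃ w ∈ S ⟨j, lt_of_lt_of_le hj hmk⟩, G.Adj v w := by
        intro j hj
        have hnP := hmmin j hj
        rw [hPdef] at hnP
        by_contra hcon
        push_neg at hcon
        exact hnP fun h w hw hadj => hcon w hw hadj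
      have hdlt : ((insert v W)ᶜ).ncard < d := by
        have hc : (insert v W)ᶜ = Wᶜ \ {v} := by
          ext x; simp [not_or, and_comm]
        rw [hc, ← hd]
        exact Set.ncard_diff_singleton_lt_of_mem hv
      have hvnotS : ∀ i, v ∉ S i := fun i hvi => hvW (hsub i hvi)
      rcases lt_or_eq_of_le hmk with hmlt | hmeq
      · -- v gets an existing color m
        set S₂ : Fin k → Set V := fun i => if i = ⟨m, hmlt⟩ then insert v (S i) else S i with hS₂
        have hmem : ∀ w, w ≠ v → ∀ i, (w ∈ S₂ i ↔ w ∈ S i) := by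
          intro w hw i
          simp only [hS₂]
          split <;> simp [hw]
        have hP₂ : PartialGC G (insert v W) k S₂ := by
          refine ⟨?_, ?_, ?_, ?_, ?_⟩
          · rintro w (rfl | hwW)
            · refine ⟨⟨m, hmlt⟩, by simp [hS₂], ?_⟩
              intro i hi
              by_contra hne'
              rw [hS₂] at hi
              simp only [hne', if_false] at hi
              exact hvnotS i hi
            · have hwv : w ≠ v := fun h => hvW (h ▸ hwW)
              obtain ⟨i, hi, hiu⟩ := hpart w hwW
              exact ⟨i, (hmem w hwv i).mpr hi, fun j hj => hiu j ((hmem w hwv j).mp hj)⟩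
          · intro i w hw
            rcases eq_or_ne w v with rfl | hwv
            · exact Set.mem_insert _ _
            · exact Set.mem_insert_of_mem _ (hsub i ((hmem w hwv i).mp hw))
          · intro i
            obtain ⟨w, hw⟩ := hne i
            refine ⟨w, ?_⟩
            by_cases hi : i = ⟨m, hmlt⟩
            · subst hi; simp [hS₂, hw]
            · simp [hS₂, hi, hw]
          · intro i x hx y hy
            rcases eq_or_ne x v with rfl | hxv
            · rcases eq_or_ne y x with rfl | hyv
              · exact G.irrefl
              · have hy' := (hmem y hyv i).mp hy
                rw [hS₂] at hx
                by_cases hi : i = ⟨m, hmlt⟩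
                · subst hi; exact hmspec hmlt y hy'
                · simp only [hi, if_false] at hx; exact absurd hx (hvnotS i)
            · rcases eq_or_ne y v with rfl | hyv
              · have hx' := (hmem x hxv i).mp hx
                rw [hS₂] at hy
                by_cases hi : i = ⟨m, hmlt⟩
                · subst hi
                  intro hadj
                  exact hmspec hmlt x hx' hadj.symm
                · simp only [hi, if_false] at hy; exact absurd hy (hvnotS i)
              · exact hstab i x ((hmem x hxv i).mp hx) y ((hmem y hyv i).mp hy)
          · intro i j hji x hx
            rcases eq_or_ne x v with rfl | hxv
            · have hi : i = ⟨m, hmlt⟩ := by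
                by_contra hi
                rw [hS₂] at hx
                simp only [hi, if_false] at hx
                exact hvnotS i hx
              subst hi
              have hjm : (j : ℕ) < m := hji
              obtain ⟨w, hw, hadj⟩ := hnbr j hjm
              refine ⟨w, ?_, hadj⟩
              have hwv : w ≠ x := fun h => hvnotS _ (by rwa [h] at hw)
              exact (hmem w hwv j).mpr (by convert hw)
            · obtain ⟨w, hw, hadj⟩ := hgr i j hji x ((hmem x hxv i).mp hx)
              have hwv : w ≠ v := fun h => hvnotS _ (by rwa [h] at hw)
              exact ⟨w, (hmem w hwv j).mpr hw, hadj⟩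
        obtain ⟨k', S', hk', hgc⟩ := IH _ hdlt (insert v W) k S₂ rfl hP₂
        exact ⟨k', S', hk', hgc⟩
      · -- v gets a new color k
        set S₂ : Fin (k + 1) → Set V := fun i =>
          if h : (i : ℕ) < k then S ⟨i, h⟩ else {v} with hS₂
        have hlast : S₂ ⟨k, lt_add_one k⟩ = {v} := by simp [hS₂]
        have hcast : ∀ (i : Fin k), S₂ i.castSucc = S i := by
          intro i; simp [hS₂, i.isLt]
        have hP₂ : PartialGC G (insert v W) (k + 1) S₂ := by
          refine ⟨?_, ?_, ?_, ?_, ?_⟩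
          · rintro w (rfl | hwW)
            · refine ⟨⟨k, lt_add_one k⟩, by simp [hlast], ?_⟩
              intro i hi
              rcases eq_or_ne ((i : ℕ)) k with hik | hik
              · exact Fin.ext hik
              · have hik' : (i : ℕ) < k := lt_of_le_of_ne (Nat.lt_succ_iff.mp i.isLt) hik
                rw [hS₂] at hi
                simp only [hik', dif_pos] at hi
                exact absurd hi (hvnotS _)
            · have hwv : w ≠ v := fun h => hvW (h ▸ hwW)
              obtain ⟨i, hi, hiu⟩ := hpart w hwW
              refine ⟨i.castSucc, ?_, ?_⟩
              · show w ∈ S₂ i.castSucc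
                rw [hcast]; exact hi
              intro j hj
              rcases Nat.lt_or_ge (j : ℕ) k with hjk | hjk
              · have : w ∈ S ⟨j, hjk⟩ := by
                  rw [hS₂] at hj; simpa [hjk] using hj
                have heq := hiu ⟨j, hjk⟩ this
                exact Fin.ext (by simpa using congrArg Fin.val heq)
              · have hjk' : ¬ ((j : ℕ) < k) := not_lt.mpr hjk
                rw [hS₂] at hj
                simp only [hjk', dif_neg, Set.mem_singleton_iff] at hj
                exact absurd hj hwv
          · intro i w hw
            rw [hS₂] at hw
            by_cases hik : (i : ℕ) < k
            · simp only [hik, dif_pos] at hw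
              exact Set.mem_insert_of_mem _ (hsub _ hw)
            · simp only [hik, dif_neg] at hw
              rw [hw]; exact Set.mem_insert _ _
          · intro i
            rw [hS₂]
            by_cases hik : (i : ℕ) < k
            · simp only [hik, dif_pos]; exact hne _
            · simp only [hik, dif_neg]; exact ⟨v, rfl⟩
          · intro i x hx y hy
            rw [hS₂] at hx hy
            by_cases hik : (i : ℕ) < k
            · simp only [hik, dif_pos] at hx hy
              exact hstab _ x hx y hy
            · simp only [hik, dif_neg] at hx hy
              rw [hx, hy]; exact G.irrefl
          · intro i j hji x hx
            have hjk : (j : ℕ) < k := lt_of_lt_of_le hji (Nat.lt_succ_iff.mp i.isLt)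
            rw [hS₂] at hx
            by_cases hik : (i : ℕ) < k
            · simp only [hik, dif_pos] at hx
              obtain ⟨w, hw, hadj⟩ := hgr ⟨i, hik⟩ ⟨j, hjk⟩ hji x hx
              refine ⟨w, ?_, hadj⟩
              rw [hS₂]; simpa [hjk] using hw
            · simp only [hik, dif_neg] at hx
              subst hx
              have hjm : (j : ℕ) < m := by omega
              obtain ⟨w, hw, hadj⟩ := hnbr j hjm
              refine ⟨w, ?_, hadj⟩
              rw [hS₂]; simpa [hjk] using hw
        obtain ⟨k', S', hk', hgc⟩ := IH _ hdlt (insert v W) (k + 1) S₂ rfl hP₂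
        exact ⟨k', S', le_trans (Nat.le_succ k) hk', hgc⟩

lemma gc_le_card {V : Type*} [Fintype V] (G : SimpleGraph V) {k : ℕ} {S : Fin k → Set V}
    (h : IsGreedyColoring G k S) : k ≤ Fintype.card V := by
  classical
  obtain ⟨hpart, hne, -, -⟩ := h
  choose f hf using hne
  have hinj : Function.Injective f := by
    intro i j hij
    obtain ⟨i', -, hu⟩ := hpart (f i)
    have h1 := hu i (hf i)
    have h2 := hu j (by rw [hij]; exact hf j)
    rw [h1, h2]
  simpa using Fintype.card_le_of_injective f hinj

lemma bddAboveGC {V : Type*} [Fintype V] (G : SimpleGraph V) :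
    BddAbove {k | ∃ S : Fin k → Set V, IsGreedyColoring G k S} :=
  ⟨Fintype.card V, fun _ ⟨_, hS⟩ => gc_le_card G hS⟩

lemma le_grundy_of_partial {V : Type*} [Fintype V] (G : SimpleGraph V) {W : Set V} {k : ℕ}
    {S : Fin k → Set V} (h : PartialGC G W k S) : k ≤ grundy G := by
  obtain ⟨k', S', hk', hgc⟩ := extendPGC G _ W k S rfl h
  exact hk'.trans (le_csSup (bddAboveGC G) ⟨S', hgc⟩)

lemma gcSetNonempty {V : Type*} [Fintype V] [Nonempty V] (G : SimpleGraph V) :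
    {k | ∃ S : Fin k → Set V, IsGreedyColoring G k S}.Nonempty := by
  obtain ⟨v0⟩ := ‹Nonempty V›
  have hp : PartialGC G {v0} 1 (fun _ => {v0}) := by
    refine ⟨?_, ?_, ?_, ?_, ?_⟩
    · rintro v rfl
      exact ⟨0, rfl, fun j _ => Subsingleton.elim _ _⟩
    · intro i; exact subset_rfl
    · intro i; exact ⟨v0, rfl⟩
    · rintro i v rfl w rfl; exact G.irrefl
    · intro i j hji
      exact absurd (Subsingleton.elim i j) (ne_of_gt hji)
  obtain ⟨k', S', -, hgc⟩ := extendPGC G _ {v0} 1 _ rfl hp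
  exact ⟨k', S', hgc⟩

/-- Let `G` and `H` be finite nonempty graphs.  If `χ(H) ≤ Δ(G)` then
`Γ(G □ H) ≥ Γ(H) + 1`. -/
theorem grundy_boxProd_ge_of_chromatic_le_maxDeg {α β : Type*}
    [Fintype α] [Fintype β] [Nonempty α] [Nonempty β]
    (G : SimpleGraph α) (H : SimpleGraph β)
    (h : H.chromaticNumber ≤ (maxDeg G : ℕ∞)) :
    grundy (G.boxProd H) ≥ grundy H + 1 := by
  classical
  -- a greedy coloring of H with `grundy H` colors
  have hmem : grundy H ∈ {k | ∃ S : Fin k → Set β, IsGreedyColoring H k S} :=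
    Nat.sSup_mem (gcSetNonempty H) (bddAboveGC H)
  obtain ⟨S, hS⟩ := hmem
  obtain ⟨Hpart, Hne, Hstab, Hgr⟩ := hS
  -- a vertex of maximum degree
  obtain ⟨a, -, ha⟩ := Finset.exists_mem_eq_sup (Finset.univ : Finset α)
    Finset.univ_nonempty (fun v => (G.neighborSet v).ncard)
  have ha' : maxDeg G = (G.neighborSet a).ncard := ha
  -- a proper coloring of H with maxDeg G colors
  have hcol : H.Colorable (maxDeg G) := chromaticNumber_le_iff_colorable.mp h
  let C : H.Coloring (Fin (maxDeg G)) := hcol.some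
  -- an injective enumeration of neighbors of a
  have hcard : Fintype.card (G.neighborSet a) = maxDeg G := by
    rw [ha', Set.ncard_eq_toFinset_card', Set.toFinset_card]
  let e : G.neighborSet a ≃ Fin (maxDeg G) := Fintype.equivFinOfCardEq hcard
  let b : Fin (maxDeg G) → α := fun i => (e.symm i : α)
  have hbinj : Function.Injective b := fun i j hij => by
    have := Subtype.val_injective hij
    simpa using e.symm.injective this
  have hbadj : ∀ i, G.Adj a (b i) := fun i => (e.symm i).2
  have hbne : ∀ i, b i ≠ a := fun i => (hbadj i).ne'
  -- the partial greedy coloring of the product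
  set T0 : Set (α × β) := Set.range (fun y => (b (C y), y)) with hT0
  set W : Set (α × β) := T0 ∪ {p | p.1 = a} with hW
  set S' : Fin (grundy H + 1) → Set (α × β) :=
    Fin.cases T0 (fun j => {p : α × β | p.1 = a ∧ p.2 ∈ S j}) with hS'
  have hS'0 : S' 0 = T0 := rfl
  have hS'succ : ∀ j : Fin (grundy H), S' j.succ = {p : α × β | p.1 = a ∧ p.2 ∈ S j} :=
    fun j => by simp [hS']
  have hPGC : PartialGC (G.boxProd H) W (grundy H + 1) S' := by
    refine ⟨?_, ?_, ?_, ?_, ?_⟩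
    · rintro p (⟨y, rfl⟩ | hpa)
      · refine ⟨0, ⟨y, rfl⟩, ?_⟩
        intro i hi
        induction i using Fin.cases with
        | zero => rfl
        | succ j =>
          rw [hS'succ] at hi
          exact absurd hi.1 (hbne (C y))
      · obtain ⟨i, hi, hiu⟩ := Hpart p.2
        refine ⟨i.succ, ?_, ?_⟩
        · show p ∈ S' i.succ
          rw [hS'succ]; exact ⟨hpa, hi⟩
        intro j hj
        induction j using Fin.cases with
        | zero =>
          obtain ⟨y, hy⟩ := hj
          have h1 : b (C y) = p.1 := congrArg Prod.fst hy
          exact absurd (h1.trans hpa) (hbne (C y))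
        | succ j' =>
          have hj' : p ∈ S' j'.succ := hj
          rw [hS'succ] at hj'
          rw [hiu j' hj'.2]
    · intro i
      induction i using Fin.cases with
      | zero => exact Set.subset_union_left
      | succ j =>
        rw [hS'succ]
        exact fun p hp => Or.inr hp.1
    · intro i
      induction i using Fin.cases with
      | zero =>
        obtain ⟨y0⟩ := ‹Nonempty β›
        exact ⟨(b (C y0), y0), y0, rfl⟩
      | succ j =>
        obtain ⟨y, hy⟩ := Hne j
        exact ⟨(a, y), by rw [hS'succ]; exact ⟨rfl, hy⟩⟩
    · intro i
      induction i using Fin.cases with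
      | zero =>
        rintro p ⟨u, rfl⟩ q ⟨w, rfl⟩ hadj
        rw [boxProd_adj] at hadj
        rcases hadj with ⟨hG, h2⟩ | ⟨hH, h1⟩
        · simp only at h2
          subst h2
          exact G.irrefl hG
        · simp only at h1
          exact C.valid hH (hbinj h1)
      | succ j =>
        intro p hp q hq hadj
        rw [hS'succ] at hp hq
        rw [boxProd_adj] at hadj
        rcases hadj with ⟨hG, -⟩ | ⟨hH, -⟩
        · rw [hp.1, hq.1] at hG
          exact G.irrefl hG
        · exact Hstab j p.2 hp.2 q.2 hq.2 hH
    · intro i j hji p hp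
      induction i using Fin.cases with
      | zero => exact absurd hji (Fin.not_lt_zero j)
      | succ i' =>
        rw [hS'succ] at hp
        induction j using Fin.cases with
        | zero =>
          refine ⟨(b (C p.2), p.2), ⟨p.2, rfl⟩, ?_⟩
          rw [boxProd_adj]
          exact Or.inl ⟨by rw [hp.1]; exact hbadj (C p.2), rfl⟩
        | succ j' =>
          have hji' : j' < i' := by
            have := hji
            rw [Fin.succ_lt_succ_iff] at this
            exact this
          obtain ⟨w, hw, hadj⟩ := Hgr i' j' hji' p.2 hp.2
          refine ⟨(a, w), by rw [hS'succ]; exact ⟨rfl, hw⟩, ?_⟩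
          rw [boxProd_adj]
          exact Or.inr ⟨by simpa using hadj, hp.1⟩
  have := le_grundy_of_partial (G.boxProd H) hPGC
  omega
end

section
/- Let G and H be finite connected graphs with Γ(G) = Γ(H) = k. If it is not the case that G and H are both isomorphic to K_1, and not the case that G and H are both isomorphic to K_2, then Γ(G □ H) ≥ k + 1. -/
/-!
A greedy coloring of part of a graph extends by first fit to a greedy coloring of the whole graph
with at least as many colors, so it is enough to greedily color part of `G □ H` with `k + 1`
colors.

Let `s` be a greedy `k`-coloring of `G` and `a` a vertex of color `k - 1`. On a fibre `G × {y}` one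
may use any window `[i, j)` of the colors of `s`, lowered by `i`; windows over adjacent vertices of
`H` do not clash as long as their shifts differ. If `H` has an induced path `x₁ x₀ x₂`, as every
connected non-complete graph does, put all of `s` over `x₁`, the window `[1, k - 1)` over `x₀` and
the window `[0, k - 2)` over `x₂`, where `a` can moreover take the color `k - 2`. Then `(a, x₀)`
sees the colors `0, …, k - 3` over `x₀`, `k - 2` at `(a, x₂)` and `k - 1` at `(a, x₁)`, so it gets
color `k`. If neither graph has such a path, both are complete, hence `K_k` with `k ≥ 3`, and the
same works over an edge `y₀ y₁` of `H`: all of `s` over `y₁`, and over `y₀` the window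
`[1, k - 1)` together with the vertex of color `0`, recolored `k - 2`.
-/

open SimpleGraph

open Set

section GreedyColoring

variable {V V' α β : Type*}

/-- A greedy coloring of the induced subgraph `G[W]` with the colors `0, …, k - 1`, recorded by a
color function on all of `V` whose values off `W` are irrelevant. -/
structure IsGreedyColoringOn (G : SimpleGraph V) (W : Set V) (k : ℕ) (c : V → ℕ) : Prop where
  lt : ∀ v ∈ W, c v < k
  exists_eq : ∀ m < k, ∃ v ∈ W, c v = m
  ne_of_adj : ∀ v ∈ W, ∀ w ∈ W, G.Adj v w → c v ≠ c w
  exists_adj : ∀ v ∈ W, ∀ m < c v, ∃ w ∈ W, G.Adj v w ∧ c w = m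

namespace IsGreedyColoringOn

variable {G : SimpleGraph V} {W : Set V} {k m : ℕ} {c : V → ℕ} {v : V}

theorem empty (G : SimpleGraph V) (c : V → ℕ) : IsGreedyColoringOn G ∅ 0 c :=
  ⟨by simp, by simp, by simp, by simp⟩

theorem extend [DecidableEq V] (h : IsGreedyColoringOn G W k c) (hv : v ∉ W) (hm : m ≤ k)
    (hfree : ∀ w ∈ W, G.Adj v w → c w ≠ m) (hall : ∀ j < m, ∃ w ∈ W, G.Adj v w ∧ c w = j) :
    IsGreedyColoringOn G (insert v W) (max k (m + 1)) (Function.update c v m) := by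
  have hc : ∀ w ∈ W, Function.update c v m w = c w :=
    fun w hw => Function.update_of_ne (ne_of_mem_of_not_mem hw hv) _ _
  refine ⟨?_, ?_, ?_, ?_⟩
  · rintro w (rfl | hw)
    · simp
    · rw [hc w hw]
      exact (h.lt w hw).trans_le (le_max_left _ _)
  · intro j hj
    by_cases hjk : j < k
    · obtain ⟨w, hw, rfl⟩ := h.exists_eq j hjk
      exact ⟨w, mem_insert_of_mem _ hw, hc w hw⟩
    · exact ⟨v, mem_insert _ _, by simp; omega⟩
  · rintro u (rfl | hu) w (rfl | hw) hadj
    · exact absurd hadj G.irrefl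
    · rw [hc w hw, Function.update_self]
      exact (hfree w hw hadj).symm
    · rw [hc u hu, Function.update_self]
      exact hfree u hu hadj.symm
    · rw [hc u hu, hc w hw]
      exact h.ne_of_adj u hu w hw hadj
  · rintro u (rfl | hu) j hj
    · rw [Function.update_self] at hj
      obtain ⟨w, hw, hadj, rfl⟩ := hall j hj
      exact ⟨w, mem_insert_of_mem _ hw, hadj, hc w hw⟩
    · rw [hc u hu] at hj
      obtain ⟨w, hw, hadj, rfl⟩ := h.exists_adj u hu j hj
      exact ⟨w, mem_insert_of_mem _ hw, hadj, hc w hw⟩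

theorem extend_top [DecidableEq V] (h : IsGreedyColoringOn G W k c) (hv : v ∉ W)
    (hall : ∀ j < k, ∃ w ∈ W, G.Adj v w ∧ c w = j) :
    IsGreedyColoringOn G (insert v W) (k + 1) (Function.update c v k) := by
  simpa using h.extend hv le_rfl (fun w hw _ => (h.lt w hw).ne) hall

/-- First fit: the new vertex takes the least color missing from its neighbourhood in `W`. -/
theorem exists_extend (h : IsGreedyColoringOn G W k c) (v : V) :
    ∃ k' ≥ k, ∃ c', IsGreedyColoringOn G (insert v W) k' c' := by
  classical
  by_cases hv : v ∈ W
  · exact ⟨k, le_rfl, c, by rwa [insert_eq_of_mem hv]⟩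
  have hfree : ∃ m, ∀ w ∈ W, G.Adj v w → c w ≠ m := ⟨k, fun w hw _ => (h.lt w hw).ne⟩
  refine ⟨_, le_max_left _ _, _, h.extend hv ?_ (Nat.find_spec hfree) fun j hj => ?_⟩
  · exact Nat.find_min' hfree fun w hw _ => (h.lt w hw).ne
  · simpa using Nat.find_min hfree hj

theorem exists_union (h : IsGreedyColoringOn G W k c) (F : Finset V) :
    ∃ k' ≥ k, ∃ c', IsGreedyColoringOn G (W ∪ F) k' c' := by
  classical
  induction F using Finset.induction_on with
  | empty => exact ⟨k, le_rfl, c, by simpa using h⟩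
  | insert v F _ ih =>
    obtain ⟨k₁, hk₁, c₁, h₁⟩ := ih
    obtain ⟨k₂, hk₂, c₂, h₂⟩ := h₁.exists_extend v
    exact ⟨k₂, hk₁.trans hk₂, c₂, by rwa [Finset.coe_insert, union_insert]⟩

theorem exists_univ [Fintype V] (h : IsGreedyColoringOn G W k c) :
    ∃ k' ≥ k, ∃ c', IsGreedyColoringOn G univ k' c' := by
  simpa using h.exists_union Finset.univ

theorem window (h : IsGreedyColoringOn G W k c) (i : ℕ) {j : ℕ} (hj : j ≤ k) :
    IsGreedyColoringOn G {v ∈ W | c v ∈ Ico i j} (j - i) (fun v => c v - i) := by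
  refine ⟨fun v ⟨_, hv⟩ => ?_, fun m hm => ?_, fun v ⟨hv, hvi⟩ w ⟨hw, hwi⟩ hadj => ?_,
    fun v ⟨hv, hvi⟩ m hm => ?_⟩
  · simp only [mem_Ico] at hv
    omega
  · obtain ⟨v, hv, hcv⟩ := h.exists_eq (m + i) (by omega)
    exact ⟨v, ⟨hv, by simp only [mem_Ico]; omega⟩, by omega⟩
  · have := h.ne_of_adj v hv w hw hadj
    simp only [mem_Ico] at hvi hwi
    omega
  · simp only [mem_Ico] at hvi
    obtain ⟨w, hw, hadj, hcw⟩ := h.exists_adj v hv (m + i) (by omega)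
    exact ⟨w, ⟨hw, by simp only [mem_Ico]; omega⟩, hadj, by omega⟩

theorem comap {G' : SimpleGraph V'} {W' : Set V'} {c' : V' → ℕ} (e : G ≃g G')
    (h : IsGreedyColoringOn G' W' k c') : IsGreedyColoringOn G (e ⁻¹' W') k (c' ∘ e) := by
  refine ⟨fun v hv => h.lt _ hv, fun j hj => ?_,
    fun v hv w hw hadj => h.ne_of_adj _ hv _ hw (e.map_adj_iff.2 hadj), fun v hv j hj => ?_⟩
  · obtain ⟨w, hw, rfl⟩ := h.exists_eq j hj
    exact ⟨e.symm w, by simpa using hw, by simp⟩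
  · obtain ⟨w, hw, hadj, rfl⟩ := h.exists_adj _ hv j hj
    exact ⟨e.symm w, by simpa using hw, by simpa using e.symm.map_adj_iff.2 hadj, by simp⟩

theorem isGreedyColoring (h : IsGreedyColoringOn G univ k c) :
    IsGreedyColoring G k fun i => {v | c v = i} := by
  refine ⟨fun v => ⟨⟨c v, h.lt v trivial⟩, rfl, fun i hi => Fin.ext hi.symm⟩, fun i => ?_,
    fun i v hv w hw hadj => h.ne_of_adj v trivial w trivial hadj (hv.trans hw.symm),
    fun i j hji v hv => ?_⟩
  · obtain ⟨v, -, hv⟩ := h.exists_eq i i.2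
    exact ⟨v, hv⟩
  · obtain ⟨w, -, hadj, hw⟩ := h.exists_adj v trivial j (by rw [show c v = i from hv]; exact hji)
    exact ⟨w, hw, hadj⟩

theorem card_le [Fintype V] (h : IsGreedyColoringOn G univ k c) : k ≤ Fintype.card V := by
  simpa using Fintype.card_le_of_surjective (fun v => (⟨c v, h.lt v trivial⟩ : Fin k))
    fun i => by simpa [Fin.ext_iff] using h.exists_eq i i.2

theorem nonempty_iso (h : IsGreedyColoringOn G univ k c) (hG : G = ⊤) :
    Nonempty (G ≃g (⊤ : SimpleGraph (Fin k))) := by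
  subst hG
  refine ⟨Iso.completeGraph (Equiv.ofBijective (fun v => ⟨c v, h.lt v trivial⟩) ⟨?_, ?_⟩)⟩
  · intro v w hvw
    by_contra hne
    exact h.ne_of_adj v trivial w trivial hne (Fin.ext_iff.1 hvw)
  · intro i
    obtain ⟨v, -, hv⟩ := h.exists_eq i i.2
    exact ⟨v, Fin.ext hv⟩

theorem eq_top_of_le_one (h : IsGreedyColoringOn G univ k c) (hk : k ≤ 1) (hG : G.Connected) :
    G = ⊤ := by
  have hbot : G = ⊥ := by
    ext v w
    refine iff_of_false (fun hadj => h.ne_of_adj v trivial w trivial hadj ?_) id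
    have := h.lt v trivial
    have := h.lt w trivial
    omega
  subst hbot
  have := (connected_bot_iff.1 hG).1
  ext v w
  simp [Subsingleton.elim v w]

end IsGreedyColoringOn

theorem IsGreedyColoring.exists_isGreedyColoringOn {G : SimpleGraph V} {k : ℕ}
    {S : Fin k → Set V} (h : IsGreedyColoring G k S) : ∃ c, IsGreedyColoringOn G univ k c := by
  obtain ⟨huniq, hne, hstab, hgreedy⟩ := h
  choose f hf hf' using huniq
  have hcolor : ∀ {v i}, v ∈ S i → f v = i := fun hv => (hf' _ _ hv).symm
  refine ⟨fun v => f v, fun v _ => (f v).2, fun j hj => ?_, fun v _ w _ hadj hvw => ?_,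
    fun v _ j hj => ?_⟩
  · obtain ⟨v, hv⟩ := hne ⟨j, hj⟩
    exact ⟨v, trivial, by simp [hcolor hv]⟩
  · exact hstab (f v) v (hf v) w (by rw [Fin.ext hvw]; exact hf w) hadj
  · obtain ⟨w, hw, hadj⟩ := hgreedy (f v) ⟨j, hj.trans (f v).2⟩ hj v (hf v)
    exact ⟨w, trivial, hadj, by simp [hcolor hw]⟩

section Grundy

variable [Fintype V] {G : SimpleGraph V}

theorem bddAbove_setOf_isGreedyColoring (G : SimpleGraph V) :
    BddAbove {k | ∃ S : Fin k → Set V, IsGreedyColoring G k S} :=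
  ⟨Fintype.card V, fun _ ⟨_, hS⟩ => hS.exists_isGreedyColoringOn.choose_spec.card_le⟩

theorem IsGreedyColoringOn.le_grundy {W : Set V} {k : ℕ} {c : V → ℕ}
    (h : IsGreedyColoringOn G W k c) : k ≤ grundy G := by
  obtain ⟨k', hk', c', h'⟩ := h.exists_univ
  exact hk'.trans (le_csSup (bddAbove_setOf_isGreedyColoring G) ⟨_, h'.isGreedyColoring⟩)

theorem exists_isGreedyColoringOn_grundy (G : SimpleGraph V) :
    ∃ c, IsGreedyColoringOn G univ (grundy G) c := by
  obtain ⟨k, -, c, h⟩ := (IsGreedyColoringOn.empty G 0).exists_univ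
  obtain ⟨S, hS⟩ := Nat.sSup_mem (s := {k | ∃ S : Fin k → Set V, IsGreedyColoring G k S})
    ⟨k, _, h.isGreedyColoring⟩ (bddAbove_setOf_isGreedyColoring G)
  exact hS.exists_isGreedyColoringOn

theorem SimpleGraph.Iso.grundy_eq [Fintype V'] {G' : SimpleGraph V'} (e : G ≃g G') :
    grundy G = grundy G' := by
  obtain ⟨c, hc⟩ := exists_isGreedyColoringOn_grundy G
  obtain ⟨c', hc'⟩ := exists_isGreedyColoringOn_grundy G'
  exact le_antisymm (hc.comap e.symm).le_grundy (hc'.comap e).le_grundy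

end Grundy

theorem SimpleGraph.Connected.exists_adj_adj_not_adj_of_ne_top {G : SimpleGraph V}
    (hG : G.Connected) (hne : G ≠ ⊤) : ∃ x y z, G.Adj x y ∧ G.Adj y z ∧ ¬ G.Adj x z ∧ x ≠ z := by
  obtain ⟨u, v, huv, hnadj⟩ := ne_top_iff_exists_not_adj.1 hne
  obtain ⟨p, hp⟩ := hG.exists_walk_length_eq_dist u v
  exact p.exists_adj_adj_not_adj_ne hp (hG.one_lt_dist_of_ne_of_not_adj huv hnadj)

section BoxProd

variable {G : SimpleGraph α} {H : SimpleGraph β} {k : ℕ} {s : α → ℕ}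

theorem isGreedyColoringOn_boxProd {Y : Set β} {W : β → Set α} {c : β → α → ℕ} {y₀ : β}
    (hy₀ : y₀ ∈ Y) (h₀ : IsGreedyColoringOn G (W y₀) k (c y₀))
    (h : ∀ y ∈ Y, ∃ n ≤ k, IsGreedyColoringOn G (W y) n (c y))
    (hH : ∀ y ∈ Y, ∀ y' ∈ Y, H.Adj y y' → ∀ b ∈ W y, b ∈ W y' → c y b ≠ c y' b) :
    IsGreedyColoringOn (G □ H) {p | p.2 ∈ Y ∧ p.1 ∈ W p.2} k (fun p => c p.2 p.1) := by
  choose n hn hc using h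
  refine ⟨?_, fun m hm => ?_, ?_, ?_⟩
  · rintro ⟨b, y⟩ ⟨hy, hb⟩
    exact ((hc y hy).lt b hb).trans_le (hn y hy)
  · obtain ⟨b, hb, rfl⟩ := h₀.exists_eq m hm
    exact ⟨(b, y₀), ⟨hy₀, hb⟩, rfl⟩
  · rintro ⟨b, y⟩ ⟨hy, hb⟩ ⟨b', y'⟩ ⟨hy', hb'⟩ hadj
    rcases boxProd_adj.1 hadj with ⟨hG, rfl : y = y'⟩ | ⟨hH', rfl : b = b'⟩
    · exact (hc y hy).ne_of_adj b hb b' hb' hG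
    · exact hH y hy y' hy' hH' b hb hb'
  · rintro ⟨b, y⟩ ⟨hy, hb⟩ m hm
    obtain ⟨b', hb', hadj, rfl⟩ := (hc y hy).exists_adj b hb m hm
    exact ⟨(b', y), ⟨hy, hb'⟩, boxProd_adj_left.2 hadj, rfl⟩

open Classical in
noncomputable def pathFibre (s : α → ℕ) (k : ℕ) (a : α) (x₀ x₂ y : β) : Set α :=
  if y = x₀ then {b | s b ∈ Ico 1 (k - 1)} else if y = x₂ then insert a {b | s b < k - 2} else univ

open Classical in
noncomputable def pathFibreColoring (s : α → ℕ) (k : ℕ) (a : α) (x₀ x₂ y : β) : α → ℕ :=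
  if y = x₀ then fun b => s b - 1 else if y = x₂ then Function.update s a (k - 2) else s

theorem IsGreedyColoringOn.boxProd_pathFibre (hs : IsGreedyColoringOn G univ k s) (hk : 2 ≤ k)
    {a : α} (ha : s a = k - 1) {x₀ x₁ x₂ : β} (h₁₀ : H.Adj x₁ x₀) (h₀₂ : H.Adj x₀ x₂)
    (h₁₂ : ¬ H.Adj x₁ x₂) (hne : x₁ ≠ x₂) :
    IsGreedyColoringOn (G □ H) {p | p.2 ∈ ({x₁, x₀, x₂} : Set β) ∧ p.1 ∈ pathFibre s k a x₀ x₂ p.2}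
      k (fun p => pathFibreColoring s k a x₀ x₂ p.2 p.1) := by
  classical
  have h₀₁ : x₁ ≠ x₀ := h₁₀.ne
  have h₂₀ : x₂ ≠ x₀ := h₀₂.ne'
  have hfib₀ := hs.window 1 (j := k - 1) (by omega)
  have hfib₂ := (hs.window 0 (j := k - 2) (by omega)).extend_top (v := a) (by simp [ha]; omega)
    fun j hj => by
      obtain ⟨b, -, hadj, hb⟩ := hs.exists_adj a trivial j (by omega)
      exact ⟨b, ⟨trivial, by simp; omega⟩, hadj, by simp [hb]⟩
  have hcentre : ∀ y ∈ ({x₁, x₀, x₂} : Set β), ∀ y' ∈ ({x₁, x₀, x₂} : Set β), H.Adj y y' →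
      y = x₀ ∨ y' = x₀ := by
    rintro y hy y' hy' hadj
    simp only [mem_insert_iff, mem_singleton_iff] at hy hy'
    rcases hy with rfl | rfl | rfl <;> rcases hy' with rfl | rfl | rfl <;>
      simp_all [hadj.ne, hadj.symm]
  have hshift : ∀ b ∈ pathFibre s k a x₀ x₂ x₀, ∀ y ≠ x₀,
      pathFibreColoring s k a x₀ x₂ x₀ b ≠ pathFibreColoring s k a x₀ x₂ y b := by
    intro b hb y hy
    simp only [pathFibre, if_pos, mem_ofPred_eq, mem_Ico] at hb
    have hba : b ≠ a := by rintro rfl; omega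
    simp only [pathFibreColoring, if_pos, if_neg hy]
    split_ifs
    · rw [Function.update_of_ne hba]
      omega
    · omega
  have hfib₁ :
      IsGreedyColoringOn G (pathFibre s k a x₀ x₂ x₁) k (pathFibreColoring s k a x₀ x₂ x₁) := by
    simpa [pathFibre, pathFibreColoring, h₀₁, hne] using hs
  refine isGreedyColoringOn_boxProd (y₀ := x₁) (by simp) hfib₁ ?_ ?_
  · rintro y (rfl | rfl | rfl)
    · exact ⟨k, le_rfl, hfib₁⟩
    · exact ⟨k - 1 - 1, by omega, by simpa [pathFibre, pathFibreColoring] using hfib₀⟩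
    · exact ⟨k - 2 - 0 + 1, by omega, by simpa [pathFibre, pathFibreColoring, h₂₀] using hfib₂⟩
  · rintro y hy y' hy' hadj b hb hb'
    rcases hcentre y hy y' hy' hadj with rfl | rfl
    · exact hshift b hb y' hadj.ne'
    · exact (hshift b hb' y hadj.ne).symm

theorem succ_le_grundy_boxProd_of_induced_path [Fintype α] [Fintype β]
    (hs : IsGreedyColoringOn G univ k s) (hk : 2 ≤ k) {x₀ x₁ x₂ : β} (h₁₀ : H.Adj x₁ x₀)
    (h₀₂ : H.Adj x₀ x₂) (h₁₂ : ¬ H.Adj x₁ x₂) (hne : x₁ ≠ x₂) :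
    k + 1 ≤ grundy (G □ H) := by
  classical
  have h₀₁ : x₁ ≠ x₀ := h₁₀.ne
  have h₂₀ : x₂ ≠ x₀ := h₀₂.ne'
  obtain ⟨a, -, ha⟩ := hs.exists_eq (k - 1) (by omega)
  refine ((hs.boxProd_pathFibre hk ha h₁₀ h₀₂ h₁₂ hne).extend_top (v := (a, x₀))
    (fun h => ?_) fun j hj => ?_).le_grundy
  · have := h.2
    simp only [pathFibre, if_pos, mem_ofPred_eq, mem_Ico] at this
    omega
  obtain hj | hj | hj : j = k - 1 ∨ j = k - 2 ∨ j < k - 2 := by omega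
  · exact ⟨(a, x₁), ⟨by simp, by simp [pathFibre, h₀₁, hne]⟩, boxProd_adj_right.2 h₁₀.symm,
      by simp [pathFibreColoring, h₀₁, hne, ha, hj]⟩
  · exact ⟨(a, x₂), ⟨by simp, by simp [pathFibre, h₂₀]⟩, boxProd_adj_right.2 h₀₂,
      by simp [pathFibreColoring, h₂₀, hj]⟩
  · obtain ⟨b, -, hadj, hb⟩ := hs.exists_adj a trivial (j + 1) (by omega)
    exact ⟨(b, x₀), ⟨by simp, by simp [pathFibre]; omega⟩, boxProd_adj_left.2 hadj,
      by simp [pathFibreColoring, hb]⟩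

open Classical in
noncomputable def edgeFibre (s : α → ℕ) (k : ℕ) (a₀ : α) (y₀ y : β) : Set α :=
  if y = y₀ then insert a₀ {b | s b ∈ Ico 1 (k - 1)} else univ

open Classical in
noncomputable def edgeFibreColoring (s : α → ℕ) (k : ℕ) (a₀ : α) (y₀ y : β) : α → ℕ :=
  if y = y₀ then Function.update (fun b => s b - 1) a₀ (k - 2) else s

theorem IsGreedyColoringOn.top_boxProd_edgeFibre
    (hs : IsGreedyColoringOn (⊤ : SimpleGraph α) univ k s) (hk : 3 ≤ k) {a₀ : α} (ha₀ : s a₀ = 0)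
    {y₀ y₁ : β} (hy : H.Adj y₀ y₁) :
    IsGreedyColoringOn ((⊤ : SimpleGraph α) □ H)
      {p | p.2 ∈ ({y₀, y₁} : Set β) ∧ p.1 ∈ edgeFibre s k a₀ y₀ p.2} k
      (fun p => edgeFibreColoring s k a₀ y₀ p.2 p.1) := by
  classical
  have h₁₀ : y₁ ≠ y₀ := hy.ne'
  have hfib₀ := (hs.window 1 (j := k - 1) (by omega)).extend_top (v := a₀) (by simp [ha₀])
    fun j hj => by
      obtain ⟨b, -, hb⟩ := hs.exists_eq (j + 1) (by omega)
      exact ⟨b, ⟨trivial, by simp; omega⟩, by simp; rintro rfl; omega, by simp [hb]⟩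
  have hfib₁ :
      IsGreedyColoringOn ⊤ (edgeFibre s k a₀ y₀ y₁) k (edgeFibreColoring s k a₀ y₀ y₁) := by
    simpa [edgeFibre, edgeFibreColoring, h₁₀] using hs
  have hshift : ∀ b ∈ edgeFibre s k a₀ y₀ y₀,
      edgeFibreColoring s k a₀ y₀ y₀ b ≠ edgeFibreColoring s k a₀ y₀ y₁ b := by
    intro b hb
    simp only [edgeFibre, edgeFibreColoring, if_pos, if_neg h₁₀, mem_insert_iff, mem_ofPred_eq,
      mem_Ico] at hb ⊢
    rcases hb with rfl | hb
    · simp only [Function.update_self, ha₀]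
      omega
    · rw [Function.update_of_ne (by rintro rfl; omega)]
      omega
  refine isGreedyColoringOn_boxProd (y₀ := y₁) (by simp) hfib₁ ?_ ?_
  · rintro y (rfl | rfl)
    · exact ⟨k - 1 - 1 + 1, by omega,
        by simpa [edgeFibre, edgeFibreColoring, Nat.sub_sub] using hfib₀⟩
    · exact ⟨k, le_rfl, hfib₁⟩
  · rintro y (rfl | rfl) y' (rfl | rfl) hadj b hb hb'
    · exact absurd hadj H.irrefl
    · exact hshift b hb
    · exact (hshift b hb').symm
    · exact absurd hadj H.irrefl

theorem succ_le_grundy_top_boxProd [Fintype α] [Fintype β]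
    (hs : IsGreedyColoringOn (⊤ : SimpleGraph α) univ k s) (hk : 3 ≤ k) {y₀ y₁ : β}
    (hy : H.Adj y₀ y₁) : k + 1 ≤ grundy ((⊤ : SimpleGraph α) □ H) := by
  classical
  have h₁₀ : y₁ ≠ y₀ := hy.ne'
  obtain ⟨a₀, -, ha₀⟩ := hs.exists_eq 0 (by omega)
  obtain ⟨a, -, ha⟩ := hs.exists_eq (k - 1) (by omega)
  refine ((hs.top_boxProd_edgeFibre hk ha₀ hy).extend_top (v := (a, y₀))
    (fun h => ?_) fun j hj => ?_).le_grundy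
  · have := h.2
    simp only [edgeFibre, if_pos, mem_insert_iff, mem_ofPred_eq, mem_Ico] at this
    rcases this with rfl | hmem <;> omega
  obtain hj | hj | hj : j = k - 1 ∨ j = k - 2 ∨ j < k - 2 := by omega
  · exact ⟨(a, y₁), ⟨by simp, by simp [edgeFibre, h₁₀]⟩, boxProd_adj_right.2 hy,
      by simp [edgeFibreColoring, h₁₀, ha, hj]⟩
  · refine ⟨(a₀, y₀), ⟨by simp, by simp [edgeFibre]⟩, boxProd_adj_left.2 ?_,
      by simp [edgeFibreColoring, hj]⟩
    rintro rfl
    omega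
  · obtain ⟨b, -, hb⟩ := hs.exists_eq (j + 1) (by omega)
    refine ⟨(b, y₀), ⟨by simp, by simp [edgeFibre]; omega⟩, boxProd_adj_left.2 ?_, ?_⟩
    · rintro rfl
      omega
    · simp [edgeFibreColoring, Function.update_of_ne (show b ≠ a₀ by rintro rfl; omega), hb]

end BoxProd

end GreedyColoring

/-- Let `G` and `H` be finite connected graphs with `Γ(G) = Γ(H) = k`.  If `G` and `H`
are not both isomorphic to `K_1`, and not both isomorphic to `K_2`, then
`Γ(G □ H) ≥ k + 1`. -/
theorem grundy_boxProd_ge_succ {α β : Type*} [Fintype α] [Fintype β]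
    (G : SimpleGraph α) (H : SimpleGraph β) (k : ℕ)
    (hGc : G.Connected) (hHc : H.Connected)
    (hG : grundy G = k) (hH : grundy H = k)
    (h1 : ¬ (Nonempty (G ≃g (⊤ : SimpleGraph (Fin 1))) ∧
             Nonempty (H ≃g (⊤ : SimpleGraph (Fin 1)))))
    (h2 : ¬ (Nonempty (G ≃g (⊤ : SimpleGraph (Fin 2))) ∧
             Nonempty (H ≃g (⊤ : SimpleGraph (Fin 2))))) :
    grundy (G.boxProd H) ≥ k + 1 := by
  obtain ⟨s, hs⟩ := exists_isGreedyColoringOn_grundy G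
  obtain ⟨t, ht⟩ := exists_isGreedyColoringOn_grundy H
  rw [hG] at hs
  rw [hH] at ht
  obtain hk | hk := Nat.lt_or_ge k 2
  · obtain rfl : k = 1 := by
      have := hs.lt _ (mem_univ hGc.nonempty.some)
      omega
    exact absurd ⟨hs.nonempty_iso (hs.eq_top_of_le_one le_rfl hGc),
      ht.nonempty_iso (ht.eq_top_of_le_one le_rfl hHc)⟩ h1
  obtain hHtop | hHtop := ne_or_eq H ⊤
  · obtain ⟨x₁, x₀, x₂, h₁₀, h₀₂, h₁₂, hne⟩ := hHc.exists_adj_adj_not_adj_of_ne_top hHtop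
    exact succ_le_grundy_boxProd_of_induced_path hs hk h₁₀ h₀₂ h₁₂ hne
  obtain hGtop | rfl := ne_or_eq G ⊤
  · obtain ⟨x₁, x₀, x₂, h₁₀, h₀₂, h₁₂, hne⟩ := hGc.exists_adj_adj_not_adj_of_ne_top hGtop
    rw [ge_iff_le, (boxProdComm G H).grundy_eq]
    exact succ_le_grundy_boxProd_of_induced_path ht hk h₁₀ h₀₂ h₁₂ hne
  obtain rfl | hk := hk.eq_or_lt
  · exact absurd ⟨hs.nonempty_iso rfl, ht.nonempty_iso hHtop⟩ h2
  obtain ⟨v, -, hv⟩ := ht.exists_eq 1 (by omega)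
  obtain ⟨w, -, hvw, -⟩ := ht.exists_adj v trivial 0 (by omega)
  exact succ_le_grundy_top_boxProd hs hk hvw
end

section
/- For every integer k ≥ 3, the k-dimensional hypercube Q_k satisfies Γ(Q_k) = k + 1. -/
open SimpleGraph

/-- The `k`-dimensional hypercube: vertices are 0-1 vectors of length `k`, two being
adjacent iff they differ in exactly one coordinate. -/
def hypercube (k : ℕ) : SimpleGraph (Fin k → Bool) where
  Adj x y := ∃! i, x i ≠ y i
  symm := ⟨fun _ _ h => by
    obtain ⟨i, hi, hu⟩ := h
    exact ⟨i, Ne.symm hi, fun j hj => hu j (Ne.symm hj)⟩⟩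
  loopless := ⟨fun _ h => by
    obtain ⟨i, hi, -⟩ := h
    exact hi rfl⟩

/-! A vertex in the last class of a greedy coloring has neighbors in all earlier classes, so
`Γ(G) ≤ Δ(G) + 1`, and `Q_k` is `k`-regular.

For the lower bound we work with Grundy functions: proper colorings by `0, …, t` in which every
vertex sees all smaller colors. The Hamming syndrome is a fall coloring of `Q_3` with four
colors: every vertex sees the three other colors, because the syndrome classes are the cosets of
the perfect code `{000, 111}`. If `G` is bipartite with sides `0, 1` and has a Grundy function `h`
with top `t`, then `G □ Q_3` has one with top `t + 3`: give `(y, z)` the color `h y + 3` when `z`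
has syndrome `3`, and `(syndrome z + side y) mod 3` otherwise. Since `Q_{m+3} ≅ Q_m □ Q_3`, this
reaches every `k ≥ 3` from `Q_0`, `Q_1` and an explicit Grundy function of `Q_5`; `Q_2` itself only
has `Γ(Q_2) = 2`. -/

variable {V α β : Type*}

structure IsGrundyFunction (G : SimpleGraph V) (c : V → ℕ) (t : ℕ) : Prop where
  le : ∀ v, c v ≤ t
  exists_eq : ∃ v, c v = t
  ne_of_adj : ∀ ⦃v w⦄, G.Adj v w → c v ≠ c w
  exists_adj : ∀ v, ∀ j < c v, ∃ w, G.Adj v w ∧ c w = j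

namespace IsGrundyFunction

variable {G : SimpleGraph V} {c : V → ℕ} {t : ℕ}

theorem exists_eq_of_le (hc : IsGrundyFunction G c t) {j : ℕ} (hj : j ≤ t) : ∃ v, c v = j := by
  obtain ⟨v, hv⟩ := hc.exists_eq
  rcases hj.eq_or_lt with rfl | hlt
  · exact ⟨v, hv⟩
  · obtain ⟨w, -, hw⟩ := hc.exists_adj v j (hv ▸ hlt)
    exact ⟨w, hw⟩

theorem isGreedyColoring (hc : IsGrundyFunction G c t) :
    IsGreedyColoring G (t + 1) fun i => {v | c v = i} := by
  refine ⟨fun v => ⟨⟨c v, Nat.lt_succ_of_le (hc.le v)⟩, rfl, fun i hi => Fin.ext hi.symm⟩,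
    fun i => hc.exists_eq_of_le (Nat.le_of_lt_succ i.2),
    fun i v hv w hw hvw => hc.ne_of_adj hvw (hv.trans hw.symm), fun i j hji v hv => ?_⟩
  obtain ⟨w, hvw, hw⟩ := hc.exists_adj v j (hv ▸ hji)
  exact ⟨w, hw, hvw⟩

theorem comp_iso {G' : SimpleGraph α} (hc : IsGrundyFunction G c t) (e : G' ≃g G) :
    IsGrundyFunction G' (c ∘ e) t where
  le v := hc.le (e v)
  exists_eq := by
    obtain ⟨v, hv⟩ := hc.exists_eq
    exact ⟨e.symm v, by simpa using hv⟩
  ne_of_adj _ _ h := hc.ne_of_adj (e.map_adj_iff.2 h)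
  exists_adj v j hj := by
    obtain ⟨w, hvw, hw⟩ := hc.exists_adj (e v) j hj
    exact ⟨e.symm w, e.map_adj_iff.1 (by rwa [e.apply_symm_apply]), by simpa using hw⟩

end IsGrundyFunction

namespace IsGreedyColoring

variable {G : SimpleGraph V} {k : ℕ} {S : Fin k → Set V}

theorem le_ncard_neighborSet (hS : IsGreedyColoring G k S) {i : Fin k} {v : V} (hv : v ∈ S i)
    (hfin : (G.neighborSet v).Finite) : (i : ℕ) ≤ (G.neighborSet v).ncard := by
  obtain ⟨hpart, -, -, hdom⟩ := hS
  have : ∀ j : Fin k, ∃ w, j < i → w ∈ S j ∧ G.Adj v w := fun j => by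
    by_cases hj : j < i
    · obtain ⟨w, hw, hvw⟩ := hdom i j hj v hv
      exact ⟨w, fun _ => ⟨hw, hvw⟩⟩
    · exact ⟨v, fun h => (hj h).elim⟩
  choose w hw using this
  calc (i : ℕ) = (Set.Iio i).ncard := by
        rw [← Fin.card_Iio i, ← Set.ncard_coe_finset, Finset.coe_Iio]
    _ ≤ (G.neighborSet v).ncard :=
      Set.ncard_le_ncard_of_injOn w (fun j hj => (hw j hj).2)
        (fun j hj j' hj' he => (hpart (w j)).unique (hw j hj).1 (he ▸ (hw j' hj').1)) hfin

theorem le_add_one_of_ncard_neighborSet_le [Finite V] (hS : IsGreedyColoring G k S) {d : ℕ}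
    (hd : ∀ v, (G.neighborSet v).ncard ≤ d) : k ≤ d + 1 := by
  rcases k with _ | k
  · omega
  obtain ⟨v, hv⟩ := hS.2.1 (Fin.last k)
  have := hS.le_ncard_neighborSet hv (Set.toFinite _)
  have := hd v
  simp only [Fin.val_last] at *
  omega

end IsGreedyColoring

structure IsFallColoring (F : SimpleGraph α) (b : α → ℕ) (n : ℕ) : Prop where
  lt : ∀ z, b z < n
  ne_of_adj : ∀ ⦃z z'⦄, F.Adj z z' → b z ≠ b z'
  exists_adj : ∀ z, ∀ a < n, a ≠ b z → ∃ z', F.Adj z z' ∧ b z' = a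

theorem IsFallColoring.exists_eq [Nonempty α] {F : SimpleGraph α} {b : α → ℕ} {n : ℕ}
    (hb : IsFallColoring F b n) {a : ℕ} (ha : a < n) : ∃ z, b z = a := by
  obtain ⟨z⟩ := ‹Nonempty α›
  by_cases hz : a = b z
  · exact ⟨z, hz.symm⟩
  · obtain ⟨z', -, hz'⟩ := hb.exists_adj z a ha hz
    exact ⟨z', hz'⟩

theorem IsGrundyFunction.exists_boxProd_of_isFallColoring [Nonempty α] {H : SimpleGraph β}
    {F : SimpleGraph α} {h : β → ℕ} {b : α → ℕ} {t : ℕ} (hh : IsGrundyFunction H h t)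
    (hH : H.Colorable 2) (hb : IsFallColoring F b 4) : ∃ c, IsGrundyFunction (H □ F) c (t + 3) := by
  obtain ⟨p⟩ := hH
  refine ⟨fun x => if b x.2 < 3 then (b x.2 + p x.1) % 3 else h x.1 + 3, ?_, ?_, ?_, ?_⟩
  · intro x
    have := hh.le x.1
    split_ifs <;> omega
  · obtain ⟨y, hy⟩ := hh.exists_eq
    obtain ⟨z, hz⟩ := hb.exists_eq (a := 3) (by norm_num)
    exact ⟨(y, z), by simp [hz, hy]⟩
  · rintro ⟨y, z⟩ ⟨y', z'⟩ hadj
    rw [boxProd_adj] at hadj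
    dsimp only at hadj ⊢
    rcases hadj with ⟨hyy', rfl⟩ | ⟨hzz', rfl⟩
    · have := Fin.val_ne_of_ne (p.valid hyy')
      have := (p y).isLt
      have := (p y').isLt
      have := hh.ne_of_adj hyy'
      split_ifs <;> omega
    · have := hb.ne_of_adj hzz'
      have := hb.lt z
      have := hb.lt z'
      split_ifs <;> omega
  · rintro ⟨y, z⟩ j hj
    dsimp only at hj
    have hbz := hb.lt z
    by_cases hj3 : j < 3
    · have hpy := (p y).isLt
      obtain ⟨z', hzz', hz'⟩ :=
        hb.exists_adj z ((j + 3 - p y) % 3) (by omega) (by split_ifs at hj <;> omega)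
      refine ⟨(y, z'), Or.inr ⟨hzz', rfl⟩, ?_⟩
      dsimp only
      rw [hz', if_pos (by omega)]
      omega
    · have hz : ¬ b z < 3 := fun hz => by rw [if_pos hz] at hj; omega
      rw [if_neg hz] at hj
      obtain ⟨y', hyy', hy'⟩ := hh.exists_adj y (j - 3) (by omega)
      refine ⟨(y', z), Or.inl ⟨hyy', rfl⟩, ?_⟩
      dsimp only
      rw [if_neg hz, hy']
      omega

section Hypercube

variable {k : ℕ}

def flipCoord (i : Fin k) (x : Fin k → Bool) : Fin k → Bool :=
  Function.update x i (!x i)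

theorem hypercube_adj_iff_exists_flipCoord {x y : Fin k → Bool} :
    (hypercube k).Adj x y ↔ ∃ i, y = flipCoord i x := by
  constructor
  · rintro ⟨i, hi, hu⟩
    refine ⟨i, funext fun j => ?_⟩
    rcases eq_or_ne j i with rfl | hj
    · revert hi
      simp only [flipCoord, Function.update_self]
      cases x j <;> cases y j <;> decide
    · rw [flipCoord, Function.update_of_ne hj]
      exact (not_not.1 (mt (hu j) hj)).symm
  · rintro ⟨i, rfl⟩
    refine ⟨i, by simp [flipCoord], fun j hj => ?_⟩
    by_contra hji
    simp [flipCoord, Function.update_of_ne hji] at hj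

theorem hypercube_exists_adj_iff {x : Fin k → Bool} {P : (Fin k → Bool) → Prop} :
    (∃ y, (hypercube k).Adj x y ∧ P y) ↔ ∃ i, P (flipCoord i x) := by
  simp only [hypercube_adj_iff_exists_flipCoord]
  exact ⟨fun ⟨_, ⟨i, rfl⟩, hP⟩ => ⟨i, hP⟩, fun ⟨i, hP⟩ => ⟨_, ⟨i, rfl⟩, hP⟩⟩

theorem hypercube_forall_adj_iff {x : Fin k → Bool} {P : (Fin k → Bool) → Prop} :
    (∀ y, (hypercube k).Adj x y → P y) ↔ ∀ i, P (flipCoord i x) := by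
  simp only [hypercube_adj_iff_exists_flipCoord]
  exact ⟨fun h i => h _ ⟨i, rfl⟩, fun h _ ⟨i, hi⟩ => hi ▸ h i⟩

theorem ncard_neighborSet_hypercube_le (x : Fin k → Bool) :
    ((hypercube k).neighborSet x).ncard ≤ k := by
  have : (hypercube k).neighborSet x = (flipCoord · x) '' Set.univ := by
    ext y
    simp [hypercube_adj_iff_exists_flipCoord, eq_comm]
  rw [this]
  exact (Set.ncard_image_le (Set.toFinite _)).trans (by simp [Set.ncard_univ])

theorem hypercube_adj_iff_hammingDist {x y : Fin k → Bool} :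
    (hypercube k).Adj x y ↔ hammingDist x y = 1 := by
  simp only [hammingDist, Finset.card_eq_one, Finset.eq_singleton_iff_unique_mem,
    Finset.mem_filter_univ]
  rfl

theorem hammingDist_append {m n : ℕ} {α : Type*} [DecidableEq α] (a a' : Fin m → α)
    (b b' : Fin n → α) :
    hammingDist (Fin.append a b) (Fin.append a' b') = hammingDist a a' + hammingDist b b' := by
  simp only [hammingDist, Finset.card_filter, Fin.sum_univ_add, Fin.append_left, Fin.append_right]

def hypercubeAppendIso (m n : ℕ) : (hypercube m □ hypercube n) ≃g hypercube (m + n) where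
  toEquiv := Fin.appendEquiv m n
  map_rel_iff' {x y} := by
    obtain ⟨a, b⟩ := x
    obtain ⟨a', b'⟩ := y
    change (hypercube (m + n)).Adj (Fin.append a b) (Fin.append a' b') ↔ _
    simp only [hypercube_adj_iff_hammingDist, hammingDist_append, boxProd_adj,
      ← hammingDist_eq_zero]
    omega

def hypercubeParity (x : Fin k → Bool) : ZMod 2 :=
  ∑ i, ((x i).toNat : ZMod 2)

theorem hypercubeParity_flipCoord (i : Fin k) (x : Fin k → Bool) :
    hypercubeParity (flipCoord i x) = hypercubeParity x + 1 := by
  have hoff : ∀ j ∈ ({i}ᶜ : Finset (Fin k)), flipCoord i x j = x j := fun j hj =>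
    Function.update_of_ne (by simpa using hj) _ _
  simp only [hypercubeParity, Fintype.sum_eq_add_sum_compl i, Finset.sum_congr rfl
    fun j hj => congrArg (fun b : Bool => (b.toNat : ZMod 2)) (hoff j hj)]
  simp only [flipCoord, Function.update_self]
  generalize ∑ j ∈ ({i}ᶜ : Finset (Fin k)), ((x j).toNat : ZMod 2) = s
  cases x i <;> revert s <;> decide

theorem hypercube_colorable_two : (hypercube k).Colorable 2 := by
  let C : (hypercube k).Coloring (ZMod 2) := Coloring.mk hypercubeParity fun h => by
    obtain ⟨i, rfl⟩ := hypercube_adj_iff_exists_flipCoord.1 h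
    simp [hypercubeParity_flipCoord]
  simpa using C.colorable

theorem isGrundyFunction_hypercube_iff {t : ℕ} {c : (Fin k → Bool) → ℕ} :
    IsGrundyFunction (hypercube k) c t ↔ (∀ x, c x ≤ t) ∧ (∃ x, c x = t) ∧
      (∀ x i, c x ≠ c (flipCoord i x)) ∧ ∀ x, ∀ j < c x, ∃ i, c (flipCoord i x) = j := by
  refine ⟨fun hc => ⟨hc.le, hc.exists_eq, fun x => hypercube_forall_adj_iff.1 fun _ h =>
    hc.ne_of_adj h, fun x j hj => hypercube_exists_adj_iff.1 (hc.exists_adj x j hj)⟩, ?_⟩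
  rintro ⟨h₁, h₂, h₃, h₄⟩
  exact ⟨h₁, h₂, fun x => hypercube_forall_adj_iff.2 (h₃ x),
    fun x j hj => hypercube_exists_adj_iff.2 (h₄ x j hj)⟩

theorem isFallColoring_hypercube_iff {n : ℕ} {b : (Fin k → Bool) → ℕ} :
    IsFallColoring (hypercube k) b n ↔ (∀ x, b x < n) ∧ (∀ x i, b x ≠ b (flipCoord i x)) ∧
      ∀ x, ∀ a < n, a ≠ b x → ∃ i, b (flipCoord i x) = a := by
  refine ⟨fun hb => ⟨hb.lt, fun x => hypercube_forall_adj_iff.1 fun _ h => hb.ne_of_adj h,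
    fun x a ha hne => hypercube_exists_adj_iff.1 (hb.exists_adj x a ha hne)⟩, ?_⟩
  rintro ⟨h₁, h₂, h₃⟩
  exact ⟨h₁, fun x => hypercube_forall_adj_iff.2 (h₂ x),
    fun x a ha hne => hypercube_exists_adj_iff.2 (h₃ x a ha hne)⟩

end Hypercube

def hammingSyndrome (x : Fin 3 → Bool) : ℕ :=
  (x 0 ^^ x 2).toNat + 2 * (x 1 ^^ x 2).toNat

theorem isFallColoring_hammingSyndrome : IsFallColoring (hypercube 3) hammingSyndrome 4 :=
  isFallColoring_hypercube_iff.2 (by decide)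

-- Found by computer search; `x` is looked up at index `∑ i, x i * 2 ^ i`.
def grundyFunctionQ5 (x : Fin 5 → Bool) : ℕ :=
  [4, 3, 1, 0, 3, 2, 0, 1, 0, 2, 2, 1, 1, 3, 3, 0, 2, 1, 0, 3, 4, 0, 1, 2, 3, 0, 1, 2, 5, 2, 0,
    1].getD (∑ i, (x i).toNat * 2 ^ (i : ℕ)) 0

theorem isGrundyFunction_grundyFunctionQ5 : IsGrundyFunction (hypercube 5) grundyFunctionQ5 5 :=
  isGrundyFunction_hypercube_iff.2 (by decide)

theorem exists_isGrundyFunction_hypercube {k : ℕ} (hk : k ≠ 2) :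
    ∃ c, IsGrundyFunction (hypercube k) c k := by
  induction k using Nat.strong_induction_on with
  | _ k ih =>
  obtain rfl | rfl | rfl | hk' : k = 0 ∨ k = 1 ∨ k = 5 ∨ 3 ≤ k ∧ k ≠ 5 := by omega
  · exact ⟨fun _ => 0, isGrundyFunction_hypercube_iff.2 (by decide)⟩
  · exact ⟨fun x => (x 0).toNat, isGrundyFunction_hypercube_iff.2 (by decide)⟩
  · exact ⟨_, isGrundyFunction_grundyFunctionQ5⟩
  · obtain ⟨m, rfl⟩ := Nat.exists_eq_add_of_le' hk'.1
    obtain ⟨h, hh⟩ := ih m (by omega) (by omega)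
    obtain ⟨c, hc⟩ :=
      hh.exists_boxProd_of_isFallColoring hypercube_colorable_two isFallColoring_hammingSyndrome
    exact ⟨_, hc.comp_iso (hypercubeAppendIso m 3).symm⟩

/-- For every `k ≥ 3`, the `k`-dimensional hypercube satisfies `Γ(Q_k) = k + 1`. -/
theorem grundy_hypercube (k : ℕ) (hk : 3 ≤ k) :
    grundy (hypercube k) = k + 1 := by
  obtain ⟨c, hc⟩ := exists_isGrundyFunction_hypercube (k := k) (by omega)
  refine IsGreatest.csSup_eq ⟨⟨_, hc.isGreedyColoring⟩, ?_⟩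
  rintro M ⟨S, hS⟩
  exact hS.le_add_one_of_ncard_neighborSet_le ncard_neighborSet_hypercube_le
end

section
/- For every integer p ≥ 2, the Cartesian product of two complete graphs on p vertices satisfies Γ(K_p □ K_p) = 2p − 2. -/
open SimpleGraph

namespace RookAux

variable {p : ℕ}

abbrev Rook (p : ℕ) : SimpleGraph (Fin p × Fin p) :=
  (⊤ : SimpleGraph (Fin p)).boxProd (⊤ : SimpleGraph (Fin p))

lemma rook_adj {u w : Fin p × Fin p} :
    (Rook p).Adj u w ↔ (u.1 ≠ w.1 ∧ u.2 = w.2) ∨ (u.2 ≠ w.2 ∧ u.1 = w.1) := by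
  simp [boxProd_adj]

/-- The color of a cell (on ℕ coordinates). -/
def colN (p i j : ℕ) : ℕ :=
  if i = p - 1 then (if j = p - 1 then 0 else (p - 1) + j)
  else if j = p - 1 then (p - 1) + i
  else (i + j) % (p - 1)

lemma colN_lt (hp : 2 ≤ p) {i j : ℕ} (hi : i < p) (hj : j < p) : colN p i j < 2 * p - 2 := by
  have hq : 0 < p - 1 := by omega
  unfold colN
  split_ifs with ha hb hc
  · omega
  · omega
  · omega
  · have := Nat.mod_lt (i + j) hq
    omega

lemma colN_sym (i j : ℕ) : colN p i j = colN p j i := by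
  unfold colN
  split_ifs <;> first | rfl | omega | rw [Nat.add_comm]

lemma colN_row_ne (hp : 2 ≤ p) {i j j' : ℕ} (hj : j < p) (hj' : j' < p) (hne : j ≠ j') :
    colN p i j ≠ colN p i j' := by
  have hq : 0 < p - 1 := by omega
  unfold colN
  by_cases ha : i = p - 1
  · rw [if_pos ha, if_pos ha]
    by_cases hb : j = p - 1
    · rw [if_pos hb, if_neg (by omega)]
      omega
    · rw [if_neg hb]
      by_cases hc : j' = p - 1
      · rw [if_pos hc]; omega
      · rw [if_neg hc]; omega
  · rw [if_neg ha, if_neg ha]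
    by_cases hb : j = p - 1
    · rw [if_pos hb, if_neg (by omega)]
      have := Nat.mod_lt (i + j') hq
      omega
    · rw [if_neg hb]
      by_cases hc : j' = p - 1
      · rw [if_pos hc]
        have := Nat.mod_lt (i + j) hq
        omega
      · rw [if_neg hc]
        intro h
        have hmod : j ≡ j' [MOD p - 1] := Nat.ModEq.add_left_cancel' i h
        have : j % (p - 1) = j' % (p - 1) := hmod
        rw [Nat.mod_eq_of_lt (by omega), Nat.mod_eq_of_lt (by omega)] at this
        exact hne this

lemma colN_surj (hp : 2 ≤ p) {d : ℕ} (hd : d < 2 * p - 2) :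
    ∃ i j : ℕ, i < p ∧ j < p ∧ colN p i j = d := by
  have hq : 0 < p - 1 := by omega
  by_cases h : d < p - 1
  · refine ⟨0, d, by omega, by omega, ?_⟩
    unfold colN
    rw [if_neg (by omega), if_neg (by omega)]
    simpa using Nat.mod_eq_of_lt h
  · refine ⟨d - (p - 1), p - 1, by omega, by omega, ?_⟩
    unfold colN
    rw [if_neg (by omega), if_pos rfl]
    omega

lemma colN_greedy (hp : 2 ≤ p) {i j d : ℕ} (hi : i < p) (hj : j < p)
    (hd : d < colN p i j) :
    ∃ i' j' : ℕ, i' < p ∧ j' < p ∧ ((i' = i ∧ j' ≠ j) ∨ (i' ≠ i ∧ j' = j)) ∧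
      colN p i' j' = d := by
  have hq : 0 < p - 1 := by omega
  have rowfill : ∀ i0 : ℕ, i0 < p - 1 → d < p - 1 →
      ∃ j', j' < p - 1 ∧ (i0 + j') % (p - 1) = d := by
    intro i0 hi0 hdq
    refine ⟨(d + (p - 1) - i0) % (p - 1), Nat.mod_lt _ hq, ?_⟩
    have h1 : (i0 + (d + (p - 1) - i0) % (p - 1)) % (p - 1)
        = (i0 + (d + (p - 1) - i0)) % (p - 1) := Nat.ModEq.add_left i0 (Nat.mod_modEq _ _)
    rw [h1]
    have h2 : i0 + (d + (p - 1) - i0) = d + (p - 1) := by omega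
    rw [h2, Nat.add_mod_right, Nat.mod_eq_of_lt hdq]
  by_cases ha : i = p - 1
  · by_cases hb : j = p - 1
    · exfalso
      unfold colN at hd
      rw [if_pos ha, if_pos hb] at hd
      omega
    · -- i = p-1, j < p-1, color (p-1)+j
      have hcol : colN p i j = (p - 1) + j := by
        unfold colN; rw [if_pos ha, if_neg hb]
      rcases Nat.lt_or_ge d (p - 1) with hdq | hdq
      · -- fill column j : cell (i', j), i' < p-1
        obtain ⟨i', hi', hc⟩ := rowfill j (by omega) hdq
        refine ⟨i', j, by omega, hj, Or.inr ⟨by omega, rfl⟩, ?_⟩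
        unfold colN
        rw [if_neg (by omega), if_neg hb, Nat.add_comm]
        exact hc
      · -- d = (p-1)+t, t < j: cell (i, t)
        refine ⟨i, d - (p - 1), hi, by omega, Or.inl ⟨rfl, by omega⟩, ?_⟩
        unfold colN
        rw [if_pos ha, if_neg (by omega)]
        omega
  · by_cases hb : j = p - 1
    · have hcol : colN p i j = (p - 1) + i := by
        unfold colN; rw [if_neg ha, if_pos hb]
      rcases Nat.lt_or_ge d (p - 1) with hdq | hdq
      · obtain ⟨j', hj', hc⟩ := rowfill i (by omega) hdq
        refine ⟨i, j', hi, by omega, Or.inl ⟨rfl, by omega⟩, ?_⟩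
        unfold colN
        rw [if_neg ha, if_neg (by omega)]
        exact hc
      · refine ⟨d - (p - 1), j, by omega, hj, Or.inr ⟨by omega, rfl⟩, ?_⟩
        unfold colN
        rw [if_neg (by omega), if_pos hb]
        omega
    · -- interior: color (i+j) % (p-1) < p-1, so d < p-1
      have hcol : colN p i j = (i + j) % (p - 1) := by
        unfold colN; rw [if_neg ha, if_neg hb]
      have hdq : d < p - 1 := by
        have := Nat.mod_lt (i + j) hq
        omega
      obtain ⟨j', hj', hc⟩ := rowfill i (by omega) hdq
      have hne : j' ≠ j := by
        intro h
        rw [h] at hc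
        omega
      refine ⟨i, j', hi, by omega, Or.inl ⟨rfl, hne⟩, ?_⟩
      unfold colN
      rw [if_neg ha, if_neg (by omega)]
      exact hc

/-- The lower bound: there is a greedy (2p-2)-coloring. -/
lemma exists_greedy (hp : 2 ≤ p) :
    ∃ S : Fin (2*p-2) → Set (Fin p × Fin p), IsGreedyColoring (Rook p) (2*p-2) S := by
  refine ⟨fun d => {u | colN p u.1.val u.2.val = d.val}, ?_, ?_, ?_, ?_⟩
  · intro u
    refine ⟨⟨colN p u.1.val u.2.val, colN_lt hp u.1.isLt u.2.isLt⟩, rfl, ?_⟩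
    intro j hj
    exact Fin.ext ((Set.mem_setOf_eq ▸ hj).symm)
  · intro i
    obtain ⟨a, b, ha, hb, hc⟩ := colN_surj hp i.isLt
    exact ⟨(⟨a, ha⟩, ⟨b, hb⟩), hc⟩
  · intro i u hu w hw hadj
    have hcc : colN p u.1.val u.2.val = colN p w.1.val w.2.val := by
      rw [Set.mem_setOf_eq] at hu hw
      rw [hu, hw]
    rcases rook_adj.mp hadj with ⟨h1, h2⟩ | ⟨h1, h2⟩
    · -- same column, different rows
      have hcc' : colN p u.2.val u.1.val = colN p u.2.val w.1.val :=
        calc colN p u.2.val u.1.val = colN p u.1.val u.2.val := colN_sym _ _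
          _ = colN p w.1.val w.2.val := hcc
          _ = colN p w.2.val w.1.val := colN_sym _ _
          _ = colN p u.2.val w.1.val := by rw [h2]
      exact colN_row_ne hp u.1.isLt w.1.isLt (fun h => h1 (Fin.ext h)) hcc'
    · have hcc' : colN p u.1.val u.2.val = colN p u.1.val w.2.val := by
        rw [h2] at hcc ⊢
        exact hcc
      exact colN_row_ne hp u.2.isLt w.2.isLt (fun h => h1 (Fin.ext h)) hcc'
  · intro i j hij u hu
    rw [Set.mem_setOf_eq] at hu
    have hd : j.val < colN p u.1.val u.2.val := by rw [hu]; exact hij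
    obtain ⟨a, b, ha, hb, hor, hc⟩ := colN_greedy hp u.1.isLt u.2.isLt hd
    refine ⟨(⟨a, ha⟩, ⟨b, hb⟩), hc, rook_adj.mpr ?_⟩
    rcases hor with ⟨e1, e2⟩ | ⟨e1, e2⟩
    · exact Or.inr ⟨fun h => e2 (congrArg Fin.val h).symm, (Fin.ext e1).symm⟩
    · exact Or.inl ⟨fun h => e1 (congrArg Fin.val h).symm, (Fin.ext e2).symm⟩

lemma adj_swap {u w : Fin p × Fin p} :
    (Rook p).Adj u.swap w.swap ↔ (Rook p).Adj u w := by
  simp only [rook_adj, Prod.fst_swap, Prod.snd_swap]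
  tauto

lemma key (hp : 2 ≤ p) (k : ℕ) (hk : 2*p - 2 < k) (S : Fin k → Set (Fin p × Fin p))
    (hpart : ∀ u : Fin p × Fin p, ∃! i, u ∈ S i)
    (hstab : ∀ i, ∀ u ∈ S i, ∀ w ∈ S i, ¬ (Rook p).Adj u w)
    (hgre : ∀ i j : Fin k, j < i → ∀ u ∈ S i, ∃ w ∈ S j, (Rook p).Adj u w)
    (v w : Fin p × Fin p)
    (hv : v ∈ S ⟨k-1, by omega⟩) (hw : w ∈ S ⟨0, by omega⟩)
    (hw1 : w.1 = v.1) (hw2 : w.2 ≠ v.2)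
    (F2 : ∀ u, (Rook p).Adj v u → u ∈ S ⟨0, by omega⟩ → u = w) : False := by
  have claim : ∀ b : Fin p, ∃ u, u ∈ S ⟨0, by omega⟩ ∧ u.1 = b ∧ u.2 ≠ v.2 := by
    intro b
    by_cases hba : b = v.1
    · exact ⟨w, hw, by rw [hw1, hba], hw2⟩
    · have hadjv : (Rook p).Adj v (b, v.2) :=
        rook_adj.mpr (Or.inl ⟨fun h => hba h.symm, rfl⟩)
      obtain ⟨ic, hic, hicu⟩ := hpart (b, v.2)
      have hic0 : ic ≠ ⟨0, by omega⟩ := by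
        intro h
        have h2 := F2 (b, v.2) hadjv (h ▸ hic)
        apply hba
        rw [← hw1, ← h2]
      have hlt0 : (⟨0, by omega⟩ : Fin k) < ic := by
        rcases Nat.eq_zero_or_pos ic.val with h0 | h0
        · exact absurd (Fin.ext h0) hic0
        · exact h0
      obtain ⟨u, hu0, hadj⟩ := hgre ic ⟨0, by omega⟩ hlt0 (b, v.2) hic
      rcases rook_adj.mp hadj with ⟨h1, h2⟩ | ⟨h1, h2⟩
      · -- u in column v.2
        exfalso
        have huv : u ≠ v := by
          rintro rfl
          obtain ⟨iu, hiu, hiuu⟩ := hpart u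
          have e1 := hiuu _ hu0
          have e2 := hiuu _ hv
          have e3 : (0 : ℕ) = k - 1 := congrArg Fin.val (e1.trans e2.symm)
          omega
        have hadjvu : (Rook p).Adj v u := by
          refine rook_adj.mpr (Or.inl ⟨fun h => huv ?_, h2⟩)
          exact Prod.ext h.symm h2.symm
        have h3 := F2 u hadjvu hu0
        rw [h3] at h2
        exact hw2 h2.symm
      · exact ⟨u, hu0, h2.symm, fun h => h1 h.symm⟩
  choose g hg1 hg2 hg3 using claim
  have hinj : Function.Injective (fun b => (g b).2) := by
    intro b b' heq
    by_contra hne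
    have hadj : (Rook p).Adj (g b) (g b') := by
      refine rook_adj.mpr (Or.inl ⟨?_, heq⟩)
      rw [hg2 b, hg2 b']
      exact hne
    exact hstab _ (g b) (hg1 b) (g b') (hg1 b') hadj
  obtain ⟨b, hb⟩ := Finite.surjective_of_injective hinj v.2
  exact hg3 b hb

lemma upper (hp : 2 ≤ p) (k : ℕ) (S : Fin k → Set (Fin p × Fin p))
    (hS : IsGreedyColoring (Rook p) k S) : k ≤ 2*p - 2 := by
  by_contra hlt'
  push_neg at hlt'
  have hlt : 2*p - 2 < k := hlt'
  obtain ⟨hpart, hne, hstab, hgre⟩ := hS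
  have hk1 : k - 1 < k := by omega
  obtain ⟨v, hv⟩ := hne ⟨k-1, hk1⟩
  classical
  set N : Finset (Fin p × Fin p) :=
    ({v.1} ×ˢ {v.2}ᶜ) ∪ ({v.1}ᶜ ×ˢ {v.2}) with hN
  have mem_N : ∀ u, u ∈ N ↔ (Rook p).Adj v u := by
    intro u
    simp only [hN, Finset.mem_union, Finset.mem_product, Finset.mem_singleton,
      Finset.mem_compl, rook_adj]
    constructor
    · rintro (⟨h1, h2⟩ | ⟨h1, h2⟩)
      · exact Or.inr ⟨fun h => h2 h.symm, h1.symm⟩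
      · exact Or.inl ⟨fun h => h1 h.symm, h2.symm⟩
    · rintro (⟨h1, h2⟩ | ⟨h1, h2⟩)
      · exact Or.inr ⟨fun h => h1 h.symm, h2.symm⟩
      · exact Or.inl ⟨h2.symm, fun h => h1 h.symm⟩
  have card_N : N.card = 2*p - 2 := by
    rw [hN, Finset.card_union_of_disjoint]
    · have c1 : ({v.2} : Finset (Fin p))ᶜ.card = p - 1 := by
        rw [Finset.card_compl, Finset.card_singleton, Fintype.card_fin]
      have c2 : ({v.1} : Finset (Fin p))ᶜ.card = p - 1 := by
        rw [Finset.card_compl, Finset.card_singleton, Fintype.card_fin]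
      rw [Finset.card_product, Finset.card_product, c1, c2,
        Finset.card_singleton, Finset.card_singleton]
      omega
    · rw [Finset.disjoint_left]
      rintro u hu1 hu2
      rw [Finset.mem_product, Finset.mem_singleton] at hu1
      rw [Finset.mem_product, Finset.mem_compl, Finset.mem_singleton] at hu2
      exact hu2.1 hu1.1
  have hch : ∀ i : Fin (k-1), ∃ u, u ∈ S ⟨i.val, by omega⟩ ∧ (Rook p).Adj v u := by
    intro i
    have hlt2 : (⟨i.val, by omega⟩ : Fin k) < ⟨k-1, hk1⟩ := i.isLt
    obtain ⟨u, hu, hadj⟩ := hgre ⟨k-1, hk1⟩ ⟨i.val, by omega⟩ hlt2 v hv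
    exact ⟨u, hu, hadj⟩
  choose W hW1 hW2 using hch
  have hWinj : Function.Injective W := by
    intro i j hij
    obtain ⟨c, hc, hcu⟩ := hpart (W i)
    have e1 := hcu _ (hW1 i)
    have e2 := hcu _ (hij ▸ hW1 j)
    have e5 := e1.trans e2.symm
    have e6 := congrArg Fin.val e5
    exact Fin.ext e6
  have hcard : k - 1 ≤ 2*p - 2 := by
    have h := Finset.card_le_card_of_injOn (s := (Finset.univ : Finset (Fin (k-1))))
      (t := N) W (fun i _ => (mem_N (W i)).mpr (hW2 i)) hWinj.injOn
    rw [card_N] at h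
    simpa using h
  have himg : (Finset.univ : Finset (Fin (k-1))).image W = N := by
    apply Finset.eq_of_subset_of_card_le
    · intro u hu
      obtain ⟨i, _, rfl⟩ := Finset.mem_image.mp hu
      exact (mem_N _).mpr (hW2 i)
    · rw [Finset.card_image_of_injective _ hWinj, card_N, Finset.card_univ,
        Fintype.card_fin]
      omega
  have h0k1 : 0 < k - 1 := by omega
  have hw : W ⟨0, h0k1⟩ ∈ S ⟨0, by omega⟩ := hW1 ⟨0, h0k1⟩
  have hwadj : (Rook p).Adj v (W ⟨0, h0k1⟩) := hW2 ⟨0, h0k1⟩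
  have F2 : ∀ u, (Rook p).Adj v u → u ∈ S ⟨0, by omega⟩ → u = W ⟨0, h0k1⟩ := by
    intro u hadj hu0
    have hmem : u ∈ (Finset.univ : Finset (Fin (k-1))).image W := by
      rw [himg]; exact (mem_N u).mpr hadj
    obtain ⟨i, _, hi⟩ := Finset.mem_image.mp hmem
    obtain ⟨c, hc, hcu⟩ := hpart u
    have e1 := hcu _ hu0
    have e2 := hcu _ (hi ▸ hW1 i)
    have e3 : (0 : ℕ) = i.val := congrArg Fin.val (e1.trans e2.symm)
    have e4 : i = ⟨0, h0k1⟩ := Fin.ext e3.symm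
    rw [← hi, e4]
  rcases rook_adj.mp hwadj with ⟨h1, h2⟩ | ⟨h1, h2⟩
  · -- w in the same column: apply key to the swapped coloring
    refine key hp k hlt (fun i => Prod.swap ⁻¹' S i)
      (fun u => ?_) (fun i u hu t ht hadj => ?_) (fun i j hij u hu => ?_)
      v.swap (W ⟨0, h0k1⟩).swap ?_ ?_ ?_ ?_ ?_
    · obtain ⟨i, hi, hiu⟩ := hpart u.swap
      exact ⟨i, hi, fun j hj => hiu j hj⟩
    · exact hstab i u.swap hu t.swap ht (adj_swap.mpr hadj)
    · obtain ⟨t, ht, hadj⟩ := hgre i j hij u.swap hu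
      refine ⟨t.swap, by simp only [Set.mem_preimage, Prod.swap_swap]; exact ht, ?_⟩
      have h5 : (Rook p).Adj u.swap.swap t.swap := adj_swap.mpr hadj
      rwa [Prod.swap_swap] at h5
    · simp only [Set.mem_preimage, Prod.swap_swap]; exact hv
    · simp only [Set.mem_preimage, Prod.swap_swap]; exact hw
    · simp only [Prod.fst_swap]; exact h2.symm
    · simp only [Prod.snd_swap]; exact Ne.symm h1
    · intro u hadj hu0
      have hadj' : (Rook p).Adj v u.swap := by
        have h5 : (Rook p).Adj v.swap.swap u.swap := adj_swap.mpr hadj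
        rwa [Prod.swap_swap] at h5
      have h6 := F2 u.swap hadj' hu0
      calc u = u.swap.swap := (Prod.swap_swap u).symm
        _ = (W ⟨0, h0k1⟩).swap := by rw [h6]
  · exact key hp k hlt S hpart hstab hgre v (W ⟨0, h0k1⟩) hv hw h2.symm
      (fun h => h1 h.symm) F2

end RookAux

/-- For every `p ≥ 2`, `Γ(K_p □ K_p) = 2p − 2`. -/
theorem grundy_boxProd_complete (p : ℕ) (hp : 2 ≤ p) :
    grundy ((⊤ : SimpleGraph (Fin p)).boxProd (⊤ : SimpleGraph (Fin p))) =
      2 * p - 2 := by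
  have hmem : (2*p - 2) ∈ {k | ∃ S : Fin k → Set (Fin p × Fin p),
      IsGreedyColoring ((⊤ : SimpleGraph (Fin p)).boxProd ⊤) k S} :=
    RookAux.exists_greedy hp
  have hub : ∀ k ∈ {k | ∃ S : Fin k → Set (Fin p × Fin p),
      IsGreedyColoring ((⊤ : SimpleGraph (Fin p)).boxProd ⊤) k S}, k ≤ 2*p - 2 := by
    rintro k ⟨S, hS⟩
    exact RookAux.upper hp k S hS
  exact le_antisymm (csSup_le ⟨_, hmem⟩ hub) (le_csSup ⟨2*p - 2, hub⟩ hmem)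
end
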